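/- arXiv:2106.06477 — 2 statements merged into one kernel-verified Lean document; each statement's English description precedes it below -/
import Mathlib

section
/- Let the activation function g and the loss ℒ (in its second argument) be differentiable, and let θ be a stationary point of the empirical risk of the original network, i.e. ∇_θ R_emp(θ) = 0. Then for every choice of biases ζ_k ∈ ℝ, the point θ̂ = β_{ζ0}(θ) (the β embedding with all outgoing weights s set to zero) is a stationary point of the empirical risk of the enlarged network: ∇_{θ̂} R̂_emp(θ̂) = 0. -/
/-- Parameters of a fully connected feedforward network: `w ℓ j i` is the weight from
unit `i` of layer `ℓ-1` to unit `j` of layer `ℓ`, and `b ℓ j` is the bias of unit `j`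
of layer `ℓ`.  Layers are numbered `1, …, L` (layer `0` is the input); units within a
layer are numbered from `0`, so layer `ℓ` consists of the units `0, …, H ℓ - 1`. -/
structure NNParams where
  w : ℕ → ℕ → ℕ → ℝ
  b : ℕ → ℕ → ℝ

/-- `layerOut g H θ x ℓ i` : the output of unit `i` of layer `ℓ` on input `x`
(`layerOut g H θ x 0 = x`, and for `ℓ ≥ 1` it is `g` applied to the pre-activation). -/
noncomputable def layerOut (g : ℝ → ℝ) (H : ℕ → ℕ) (θ : NNParams) (x : ℕ → ℝ) :
    ℕ → ℕ → ℝ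
  | 0, i => x i
  | ℓ + 1, i =>
      g (∑ j ∈ Finset.range (H ℓ), θ.w (ℓ + 1) i j * layerOut g H θ x ℓ j + θ.b (ℓ + 1) i)

/-- Pre-activation `a_j^ℓ(x, θ)` of unit `j` of layer `ℓ ≥ 1`:
`a_j^ℓ = ∑_{i < H (ℓ-1)} w_{ji}^ℓ · (output of unit i of layer ℓ-1) + σ_j^ℓ`.
The outputs of the last layer `L` are `f_r(x,θ) = preact g H θ x L r` (linear output units). -/
noncomputable def preact (g : ℝ → ℝ) (H : ℕ → ℕ) (θ : NNParams) (x : ℕ → ℝ)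
    (ℓ j : ℕ) : ℝ :=
  ∑ i ∈ Finset.range (H (ℓ - 1)), θ.w ℓ j i * layerOut g H θ x (ℓ - 1) i + θ.b ℓ j

/-- Empirical risk `R_emp(θ) = (1/P) ∑_{p<P} ℒ(y^p, f(x^p, θ))`, where the network has
`L` layers with layer sizes given by `H`, the training inputs are `X p` and the labels
`Y p`, and `m` is the output dimension seen by the loss. -/
noncomputable def Remp (g : ℝ → ℝ) (H : ℕ → ℕ) (L P : ℕ) {m : ℕ}
    (X Y : ℕ → ℕ → ℝ) (loss : (ℕ → ℝ) → (Fin m → ℝ) → ℝ) (θ : NNParams) : ℝ :=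
  (1 / (P : ℝ)) * ∑ p ∈ Finset.range P,
    loss (Y p) (fun r => preact g H θ (X p) L r)

/-- Layer sizes of the network enlarged by adding `K` new neurons to layer `l`. -/
def enlargeH (H : ℕ → ℕ) (l K : ℕ) : ℕ → ℕ :=
  fun ℓ => if ℓ = l then H l + K else H ℓ

/-- The embedding `α_{ζv}` : copy all parameters, give the `k`-th new neuron of layer `l`
(`k = 0, …, K-1`, i.e. unit `H l + k`) the bias `ζ k` and incoming weights `v k`, and
set all weights from the new neurons to layer `l+1` to zero. -/
noncomputable def alphaEmb (H : ℕ → ℕ) (l K : ℕ) (ζ : ℕ → ℝ) (v : ℕ → ℕ → ℝ)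
    (θ : NNParams) : NNParams where
  w := fun ℓ j i =>
    if ℓ = l ∧ H l ≤ j then v (j - H l) i
    else if ℓ = l + 1 ∧ H l ≤ i then 0
    else θ.w ℓ j i
  b := fun ℓ j => if ℓ = l ∧ H l ≤ j then ζ (j - H l) else θ.b ℓ j

/-- The embedding `β_{ζs}` : copy all parameters except the biases of layer `l+1`, give
the `k`-th new neuron of layer `l` the bias `ζ k` and zero incoming weights, set the
outgoing weight from the `k`-th new neuron to unit `j` of layer `l+1` to `s j k`, and
replace the bias of unit `j` of layer `l+1` by `σ_j - ∑_{k<K} s j k · g (ζ k)`. -/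
noncomputable def betaEmb (g : ℝ → ℝ) (H : ℕ → ℕ) (l K : ℕ) (ζ : ℕ → ℝ)
    (s : ℕ → ℕ → ℝ) (θ : NNParams) : NNParams where
  w := fun ℓ j i =>
    if ℓ = l ∧ H l ≤ j then 0
    else if ℓ = l + 1 ∧ H l ≤ i then s j (i - H l)
    else θ.w ℓ j i
  b := fun ℓ j =>
    if ℓ = l ∧ H l ≤ j then ζ (j - H l)
    else if ℓ = l + 1 then θ.b (l + 1) j - ∑ k ∈ Finset.range K, s j k * g (ζ k)
    else θ.b ℓ j

/-- The embedding `γ_λ` : duplicate unit `h` of layer `l` into each of the `K` new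
neurons (same bias and incoming weights as unit `h`), and split the outgoing weights:
unit `h` keeps `lam 0 · w_{jh}^{l+1}` and the `k`-th new neuron (`k = 0, …, K-1`,
i.e. unit `H l + k`, corresponding to `λ_{k+1}` of the paper) gets
`lam (k+1) · w_{jh}^{l+1}`; all other parameters are copied. -/
noncomputable def gammaEmb (H : ℕ → ℕ) (l K : ℕ) (h : ℕ) (lam : ℕ → ℝ)
    (θ : NNParams) : NNParams where
  w := fun ℓ j i =>
    if ℓ = l ∧ H l ≤ j then θ.w l h i
    else if ℓ = l + 1 ∧ i = h then lam 0 * θ.w (l + 1) j h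
    else if ℓ = l + 1 ∧ H l ≤ i then lam (i - H l + 1) * θ.w (l + 1) j h
    else θ.w ℓ j i
  b := fun ℓ j => if ℓ = l ∧ H l ≤ j then θ.b l h else θ.b ℓ j

/-- `θ` with the single weight `w ℓ j i` replaced by `t`. -/
noncomputable def updW (θ : NNParams) (ℓ j i : ℕ) (t : ℝ) : NNParams :=
  ⟨fun ℓ' j' i' => if ℓ' = ℓ ∧ j' = j ∧ i' = i then t else θ.w ℓ' j' i', θ.b⟩

/-- `θ` with the single bias `b ℓ j` replaced by `t`. -/
noncomputable def updB (θ : NNParams) (ℓ j : ℕ) (t : ℝ) : NNParams :=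
  ⟨θ.w, fun ℓ' j' => if ℓ' = ℓ ∧ j' = j then t else θ.b ℓ' j'⟩

/-- `∇ R_emp(θ) = 0` : every partial derivative of the empirical risk with respect to an
actual network parameter (a weight `w ℓ j i` or a bias `b ℓ j`, `1 ≤ ℓ ≤ L`, `j < H ℓ`,
`i < H (ℓ-1)`) vanishes at `θ`. -/
def IsCritical (g : ℝ → ℝ) (H : ℕ → ℕ) (L P : ℕ) {m : ℕ}
    (X Y : ℕ → ℕ → ℝ) (loss : (ℕ → ℝ) → (Fin m → ℝ) → ℝ) (θ : NNParams) : Prop :=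
  (∀ ℓ j i, 1 ≤ ℓ → ℓ ≤ L → j < H ℓ → i < H (ℓ - 1) →
      deriv (fun t => Remp g H L P X Y loss (updW θ ℓ j i t)) (θ.w ℓ j i) = 0) ∧
  ∀ ℓ j, 1 ≤ ℓ → ℓ ≤ L → j < H ℓ →
      deriv (fun t => Remp g H L P X Y loss (updB θ ℓ j t)) (θ.b ℓ j) = 0

/-- Layer sizes after enlarging layer `p.1` by `p.2` neurons for each pair in the list. -/
def multiEnlargeH : (ℕ → ℕ) → List (ℕ × ℕ) → (ℕ → ℕ)
  | H, [] => H
  | H, (l, K) :: rest => multiEnlargeH (enlargeH H l K) rest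

/-- Composition of `α` embeddings: for each `(l, K)` in the list (in order), add `K` new
neurons to layer `l` via `α` with biases `ζ l` and incoming weights `v l`. -/
noncomputable def multiAlpha (ζ : ℕ → ℕ → ℝ) (v : ℕ → ℕ → ℕ → ℝ) :
    (ℕ → ℕ) → List (ℕ × ℕ) → NNParams → NNParams
  | _, [], θ => θ
  | H, (l, K) :: rest, θ =>
      multiAlpha ζ v (enlargeH H l K) rest (alphaEmb H l K (ζ l) (v l) θ)

noncomputable def multiBeta (g : ℝ → ℝ) (ζ : ℕ → ℕ → ℝ) (s : ℕ → ℕ → ℕ → ℝ) :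
    (ℕ → ℕ) → List (ℕ × ℕ) → NNParams → NNParams
  | _, [], θ => θ
  | H, (l, K) :: rest, θ =>
      multiBeta g ζ s (enlargeH H l K) rest (betaEmb g H l K (ζ l) (s l) θ)

noncomputable def multiGamma (hsel : ℕ → ℕ) (lam : ℕ → ℕ → ℝ) :
    (ℕ → ℕ) → List (ℕ × ℕ) → NNParams → NNParams
  | _, [], θ => θ
  | H, (l, K) :: rest, θ =>
      multiGamma hsel lam (enlargeH H l K) rest (gammaEmb H l K (hsel l) (lam l) θ)

/-- A single enlargement step: either a `β` embedding with zero outgoing weights, or a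
`γ` embedding. -/
inductive EmbStep where
  | beta (l K : ℕ) (ζ : ℕ → ℝ)
  | gamma (l K : ℕ) (h : ℕ) (lam : ℕ → ℝ)

def EmbStep.layer : EmbStep → ℕ
  | .beta l _ _ => l
  | .gamma l _ _ _ => l

def EmbStep.count : EmbStep → ℕ
  | .beta _ K _ => K
  | .gamma _ K _ _ => K

noncomputable def EmbStep.apply (g : ℝ → ℝ) (H : ℕ → ℕ) (θ : NNParams) : EmbStep → NNParams
  | .beta l K ζ => betaEmb g H l K ζ (fun _ _ => 0) θ
  | .gamma l K h lam => gammaEmb H l K h lam θ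

def EmbStep.OK (H : ℕ → ℕ) (L : ℕ) : EmbStep → Prop
  | .beta l _ _ => 1 ≤ l ∧ l + 1 ≤ L
  | .gamma l K h lam => 1 ≤ l ∧ l + 1 ≤ L ∧ h < H l ∧ ∑ i ∈ Finset.range (K + 1), lam i = 1

noncomputable def applySteps (g : ℝ → ℝ) : (ℕ → ℕ) → List EmbStep → NNParams → NNParams
  | _, [], θ => θ
  | H, st :: rest, θ =>
      applySteps g (enlargeH H st.layer st.count) rest (EmbStep.apply g H θ st)

def stepsH : (ℕ → ℕ) → List EmbStep → (ℕ → ℕ)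
  | H, [] => H
  | H, st :: rest => stepsH (enlargeH H st.layer st.count) rest

/-!
Perturbing one coordinate of `θ̂ = β_{ζ0}(θ)` moves the enlarged network along a curve of
networks that the original architecture also computes. An old parameter moves the same
parameter of `θ`. The incoming weights and bias of a new neuron are invisible, since its
outgoing weights vanish. The outgoing weight `t` from the `k`-th new neuron, which outputs the
constant `g (ζ k)`, acts as the shift `t · g (ζ k)` of a bias of layer `l + 1`. So every
partial derivative of `R̂_emp` at `θ̂` is a multiple of a partial derivative of `R_emp` at `θ`.
-/

open Finset

section BetaLift

variable {g : ℝ → ℝ} {H : ℕ → ℕ} {l K : ℕ} {φ ψ : NNParams}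

/-- `φ`, parameters of the network enlarged by `K` neurons in layer `l`, computes the same
function as `ψ`: the biases of layer `l + 1` of `ψ` absorb the contributions `w · g (bias)`
of the new neurons, each of which is silent (zero outgoing weights) or constant (zero
incoming weights). -/
structure IsBetaLift (g : ℝ → ℝ) (H : ℕ → ℕ) (l K : ℕ) (φ ψ : NNParams) : Prop where
  w_eq : ∀ ℓ j i, ¬(ℓ = l ∧ H l ≤ j) → ¬(ℓ = l + 1 ∧ H l ≤ i) → φ.w ℓ j i = ψ.w ℓ j i
  b_eq : ∀ ℓ j, ¬(ℓ = l ∧ H l ≤ j) → ℓ ≠ l + 1 → φ.b ℓ j = ψ.b ℓ j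
  b_succ_eq : ∀ j, ψ.b (l + 1) j =
    φ.b (l + 1) j + ∑ k ∈ range K, φ.w (l + 1) j (H l + k) * g (φ.b l (H l + k))
  silent_or_constant : ∀ k < K,
    (∀ j, φ.w (l + 1) j (H l + k) = 0) ∨ ∀ i, φ.w l (H l + k) i = 0

lemma enlargeH_self (H : ℕ → ℕ) (l K : ℕ) : enlargeH H l K l = H l + K := if_pos rfl

lemma enlargeH_of_ne (H : ℕ → ℕ) {l ℓ : ℕ} (K : ℕ) (h : ℓ ≠ l) : enlargeH H l K ℓ = H ℓ :=
  if_neg h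

namespace IsBetaLift

lemma weight_mul_layerOut_new (h : IsBetaLift g H l K φ ψ) (hl1 : 1 ≤ l) (x : ℕ → ℝ)
    (j : ℕ) {k : ℕ} (hk : k < K) :
    φ.w (l + 1) j (H l + k) * layerOut g (enlargeH H l K) φ x l (H l + k) =
      φ.w (l + 1) j (H l + k) * g (φ.b l (H l + k)) := by
  rcases h.silent_or_constant k hk with hsilent | hconst
  · rw [hsilent, zero_mul, zero_mul]
  · obtain ⟨l', rfl⟩ : ∃ l', l = l' + 1 := ⟨l - 1, by omega⟩
    simp only [layerOut, hconst, zero_mul, sum_const_zero, zero_add]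

lemma preact_succ_eq (h : IsBetaLift g H l K φ ψ) (hl1 : 1 ≤ l) (x : ℕ → ℝ) {ℓ j : ℕ}
    (hj : ℓ + 1 = l → j < H l)
    (hout : ∀ i, (ℓ = l → i < H l) →
      layerOut g (enlargeH H l K) φ x ℓ i = layerOut g H ψ x ℓ i) :
    ∑ i ∈ range (enlargeH H l K ℓ),
        φ.w (ℓ + 1) j i * layerOut g (enlargeH H l K) φ x ℓ i + φ.b (ℓ + 1) j =
      ∑ i ∈ range (H ℓ), ψ.w (ℓ + 1) j i * layerOut g H ψ x ℓ i + ψ.b (ℓ + 1) j := by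
  have hj' : ¬(ℓ + 1 = l ∧ H l ≤ j) := fun ⟨he, hle⟩ => (hj he).not_ge hle
  by_cases hℓ : ℓ = l
  · subst hℓ
    have hold : ∀ i ∈ range (H ℓ), φ.w (ℓ + 1) j i * layerOut g (enlargeH H ℓ K) φ x ℓ i =
        ψ.w (ℓ + 1) j i * layerOut g H ψ x ℓ i := fun i hi => by
      have hi := mem_range.1 hi
      rw [h.w_eq _ _ _ hj' (by omega), hout i fun _ => hi]
    rw [enlargeH_self, sum_range_add, sum_congr rfl hold,
      sum_congr rfl fun k hk => h.weight_mul_layerOut_new hl1 x j (mem_range.1 hk),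
      h.b_succ_eq]
    ring
  · have hold : ∀ i ∈ range (H ℓ), φ.w (ℓ + 1) j i * layerOut g (enlargeH H l K) φ x ℓ i =
        ψ.w (ℓ + 1) j i * layerOut g H ψ x ℓ i := fun i _ => by
      rw [h.w_eq _ _ _ hj' (by omega), hout i fun h => absurd h hℓ]
    rw [enlargeH_of_ne H K hℓ, sum_congr rfl hold, h.b_eq _ _ hj' (by omega)]

lemma layerOut_eq (h : IsBetaLift g H l K φ ψ) (hl1 : 1 ≤ l) (x : ℕ → ℝ) :
    ∀ ℓ j, (ℓ = l → j < H l) →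
      layerOut g (enlargeH H l K) φ x ℓ j = layerOut g H ψ x ℓ j
  | 0, _, _ => rfl
  | ℓ + 1, _, hj => congrArg g (h.preact_succ_eq hl1 x hj (h.layerOut_eq hl1 x ℓ))

lemma preact_eq (h : IsBetaLift g H l K φ ψ) (hl1 : 1 ≤ l) {L : ℕ} (hlL : l + 1 ≤ L)
    (x : ℕ → ℝ) (r : ℕ) : preact g (enlargeH H l K) φ x L r = preact g H ψ x L r := by
  obtain ⟨M, rfl⟩ : ∃ M, L = M + 1 := ⟨L - 1, by omega⟩
  exact h.preact_succ_eq hl1 x (by omega) (h.layerOut_eq hl1 x M)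

lemma Remp_eq (h : IsBetaLift g H l K φ ψ) (hl1 : 1 ≤ l) {L : ℕ} (hlL : l + 1 ≤ L)
    (P : ℕ) {m : ℕ} (X Y : ℕ → ℕ → ℝ) (loss : (ℕ → ℝ) → (Fin m → ℝ) → ℝ) :
    Remp g (enlargeH H l K) L P X Y loss φ = Remp g H L P X Y loss ψ := by
  simp only [Remp, h.preact_eq hl1 hlL]

end IsBetaLift

@[simp] lemma updW_w (θ : NNParams) (ℓ j i : ℕ) (t : ℝ) (ℓ' j' i' : ℕ) :
    (updW θ ℓ j i t).w ℓ' j' i' = if ℓ' = ℓ ∧ j' = j ∧ i' = i then t else θ.w ℓ' j' i' :=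
  rfl

@[simp] lemma updW_b (θ : NNParams) (ℓ j i : ℕ) (t : ℝ) : (updW θ ℓ j i t).b = θ.b := rfl

@[simp] lemma updB_w (θ : NNParams) (ℓ j : ℕ) (t : ℝ) : (updB θ ℓ j t).w = θ.w := rfl

@[simp] lemma updB_b (θ : NNParams) (ℓ j : ℕ) (t : ℝ) (ℓ' j' : ℕ) :
    (updB θ ℓ j t).b ℓ' j' = if ℓ' = ℓ ∧ j' = j then t else θ.b ℓ' j' := rfl

lemma isBetaLift_of_silent
    (hw : ∀ ℓ j i, ¬(ℓ = l ∧ H l ≤ j) → ¬(ℓ = l + 1 ∧ H l ≤ i) → φ.w ℓ j i = ψ.w ℓ j i)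
    (hb : ∀ ℓ j, ¬(ℓ = l ∧ H l ≤ j) → φ.b ℓ j = ψ.b ℓ j)
    (hsilent : ∀ j i, H l ≤ i → φ.w (l + 1) j i = 0) : IsBetaLift g H l K φ ψ where
  w_eq := hw
  b_eq ℓ j hj _ := hb ℓ j hj
  b_succ_eq j := by simp [hsilent, hb (l + 1) j (by omega)]
  silent_or_constant k _ := .inl fun j => hsilent j _ (by omega)

lemma isBetaLift_betaEmb_zero (g : ℝ → ℝ) (H : ℕ → ℕ) (l K : ℕ) (ζ : ℕ → ℝ)
    (θ : NNParams) : IsBetaLift g H l K (betaEmb g H l K ζ (fun _ _ => 0) θ) θ := by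
  refine isBetaLift_of_silent (fun _ _ _ h1 h2 => by simp [betaEmb, h1, h2]) (fun ℓ j h => ?_)
    (fun _ _ hi => by simp [betaEmb, hi])
  simp only [betaEmb, if_neg h]
  split_ifs with hℓ
  · simp [hℓ]
  · rfl

namespace IsBetaLift

lemma b_eq_of_silent (h : IsBetaLift g H l K φ ψ)
    (hsilent : ∀ j i, H l ≤ i → φ.w (l + 1) j i = 0) {ℓ j : ℕ} (hj : ¬(ℓ = l ∧ H l ≤ j)) :
    φ.b ℓ j = ψ.b ℓ j := by
  by_cases hℓ : ℓ = l + 1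
  · subst hℓ
    simp [h.b_succ_eq, hsilent]
  · exact h.b_eq ℓ j hj hℓ

lemma updW_old (h : IsBetaLift g H l K φ ψ) (hsilent : ∀ j i, H l ≤ i → φ.w (l + 1) j i = 0)
    {ℓ i : ℕ} (j : ℕ) (hi : ¬(ℓ = l + 1 ∧ H l ≤ i)) (t : ℝ) :
    IsBetaLift g H l K (updW φ ℓ j i t) (updW ψ ℓ j i t) := by
  refine isBetaLift_of_silent (fun ℓ' j' i' h1 h2 => ?_) (fun ℓ' j' h1 => ?_)
    (fun j' i' h1 => ?_)
  · simp only [updW_w]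
    split_ifs
    · rfl
    · exact h.w_eq ℓ' j' i' h1 h2
  · exact h.b_eq_of_silent hsilent h1
  · rw [updW_w, if_neg (by omega), hsilent j' i' h1]

lemma updB_old (h : IsBetaLift g H l K φ ψ) (hsilent : ∀ j i, H l ≤ i → φ.w (l + 1) j i = 0)
    (ℓ j : ℕ) (t : ℝ) :
    IsBetaLift g H l K (updB φ ℓ j t) (updB ψ ℓ j t) := by
  refine isBetaLift_of_silent (fun ℓ' j' i' h1 h2 => h.w_eq ℓ' j' i' h1 h2)
    (fun ℓ' j' h1 => ?_) hsilent
  simp only [updB_b]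
  split_ifs
  · rfl
  · exact h.b_eq_of_silent hsilent h1

lemma updW_incoming (h : IsBetaLift g H l K φ ψ)
    (hsilent : ∀ j i, H l ≤ i → φ.w (l + 1) j i = 0) {j : ℕ} (hj : H l ≤ j) (i : ℕ) (t : ℝ) :
    IsBetaLift g H l K (updW φ l j i t) ψ := by
  refine isBetaLift_of_silent (fun ℓ' j' i' h1 h2 => ?_)
    (fun ℓ' j' h1 => h.b_eq_of_silent hsilent h1) (fun j' i' h1 => ?_)
  · rw [updW_w, if_neg (by omega), h.w_eq ℓ' j' i' h1 h2]
  · rw [updW_w, if_neg (by omega), hsilent j' i' h1]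

lemma updB_new (h : IsBetaLift g H l K φ ψ)
    (hsilent : ∀ j i, H l ≤ i → φ.w (l + 1) j i = 0) {j : ℕ} (hj : H l ≤ j) (t : ℝ) :
    IsBetaLift g H l K (updB φ l j t) ψ := by
  refine isBetaLift_of_silent (fun ℓ' j' i' h1 h2 => h.w_eq ℓ' j' i' h1 h2)
    (fun ℓ' j' h1 => ?_) hsilent
  rw [updB_b, if_neg (by omega), h.b_eq_of_silent hsilent h1]

lemma updW_outgoing (h : IsBetaLift g H l K φ ψ)
    (hsilent : ∀ j i, H l ≤ i → φ.w (l + 1) j i = 0)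
    (hconst : ∀ j i, H l ≤ j → φ.w l j i = 0) (j : ℕ) {k : ℕ} (hk : k < K) (t : ℝ) :
    IsBetaLift g H l K (updW φ (l + 1) j (H l + k) t)
      (updB ψ (l + 1) j (ψ.b (l + 1) j + t * g (φ.b l (H l + k)))) where
  w_eq ℓ' j' i' h1 h2 := by rw [updW_w, if_neg (by omega), updB_w, h.w_eq ℓ' j' i' h1 h2]
  b_eq ℓ' j' h1 h2 := by rw [updW_b, updB_b, if_neg (by omega), h.b_eq ℓ' j' h1 h2]
  b_succ_eq j' := by
    have hb : ψ.b (l + 1) = φ.b (l + 1) :=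
      funext fun _ => (h.b_eq_of_silent hsilent (by omega)).symm
    by_cases hj' : j' = j
    · subst hj'
      simp [hb, hsilent, hk]
    · simp [hb, hj', hsilent]
  silent_or_constant k' _ :=
    .inr fun i => by rw [updW_w, if_neg (by omega), hconst _ i (by omega)]

end IsBetaLift

end BetaLift

lemma lt_of_lt_enlargeH {H : ℕ → ℕ} {l K ℓ j : ℕ} (hj : j < enlargeH H l K ℓ)
    (hnew : ¬(ℓ = l ∧ H l ≤ j)) : j < H ℓ := by
  unfold enlargeH at hj
  split_ifs at hj with hℓ
  · subst hℓ; omega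
  · exact hj

lemma deriv_Remp_eq_of_isBetaLift {g : ℝ → ℝ} {H : ℕ → ℕ} {l K L : ℕ} (hl1 : 1 ≤ l)
    (hlL : l + 1 ≤ L) (P : ℕ) {m : ℕ} (X Y : ℕ → ℕ → ℝ) (loss : (ℕ → ℝ) → (Fin m → ℝ) → ℝ)
    {φ ψ : ℝ → NNParams} (h : ∀ t, IsBetaLift g H l K (φ t) (ψ t)) :
    deriv (fun t => Remp g (enlargeH H l K) L P X Y loss (φ t)) =
      deriv (fun t => Remp g H L P X Y loss (ψ t)) :=
  congrArg deriv (funext fun t => (h t).Remp_eq hl1 hlL P X Y loss)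

lemma deriv_comp_const_add_mul_eq_zero {𝕜 E : Type*} [NontriviallyNormedField 𝕜]
    [NormedAddCommGroup E] [NormedSpace 𝕜 E] {F : 𝕜 → E} {b : 𝕜} (hF : deriv F b = 0)
    (c : 𝕜) :
    deriv (fun t => F (b + t * c)) 0 = 0 := by
  have := deriv_comp_mul_left c (fun u => F (b + u)) 0
  simp only [mul_zero, deriv_comp_const_add, add_zero, hF, smul_zero] at this
  simpa only [mul_comm] using this

theorem betaEmb_zero_is_critical_general
    (g : ℝ → ℝ) (H : ℕ → ℕ) (L P : ℕ) (X Y : ℕ → ℕ → ℝ)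
    (loss : (ℕ → ℝ) → (Fin (H L) → ℝ) → ℝ)
    (l : ℕ) (hl1 : 1 ≤ l) (hlL : l + 1 ≤ L) (K : ℕ) (ζ : ℕ → ℝ) (θ : NNParams)
    (hθ : IsCritical g H L P X Y loss θ)
    (θhat : NNParams) (hemb : θhat = betaEmb g H l K ζ (fun _ _ => 0) θ) :
    IsCritical g (enlargeH H l K) L P X Y loss θhat := by
  subst hemb
  set φ := betaEmb g H l K ζ (fun _ _ => 0) θ
  have hlift : IsBetaLift g H l K φ θ := isBetaLift_betaEmb_zero g H l K ζ θ
  have hsilent : ∀ j i, H l ≤ i → φ.w (l + 1) j i = 0 := fun _ _ hi => by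
    simp [φ, betaEmb, hi]
  have hconst : ∀ j i, H l ≤ j → φ.w l j i = 0 := fun j i hj => by simp [φ, betaEmb, hj]
  have hderiv := @deriv_Remp_eq_of_isBetaLift g H l K L hl1 hlL P _ X Y loss
  refine ⟨fun ℓ j i hℓ1 hℓL hj hi => ?_, fun ℓ j hℓ1 hℓL hj => ?_⟩
  · by_cases hin : ℓ = l ∧ H l ≤ j
    · obtain ⟨rfl, hjl⟩ := hin
      rw [hderiv (hlift.updW_incoming hsilent hjl i), deriv_const]
    by_cases hout : ℓ = l + 1 ∧ H l ≤ i
    · obtain ⟨rfl, hil⟩ := hout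
      obtain ⟨k, rfl⟩ := Nat.exists_eq_add_of_le hil
      have hk : k < K := by simpa [enlargeH_self] using hi
      rw [hderiv (hlift.updW_outgoing hsilent hconst j hk), hsilent j _ hil]
      exact deriv_comp_const_add_mul_eq_zero
        (hθ.2 (l + 1) j hℓ1 hℓL (lt_of_lt_enlargeH hj (by omega))) _
    · rw [hderiv (hlift.updW_old hsilent j hout), hlift.w_eq ℓ j i hin hout]
      exact hθ.1 ℓ j i hℓ1 hℓL (lt_of_lt_enlargeH hj hin) (lt_of_lt_enlargeH hi (by omega))
  · by_cases hnew : ℓ = l ∧ H l ≤ j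
    · obtain ⟨rfl, hjl⟩ := hnew
      rw [hderiv (hlift.updB_new hsilent hjl), deriv_const]
    · rw [hderiv (hlift.updB_old hsilent ℓ j), hlift.b_eq_of_silent hsilent hnew]
      exact hθ.2 ℓ j hℓ1 hℓL (lt_of_lt_enlargeH hj hnew)

/-- If `g` and the loss (in its second argument) are differentiable and
`θ` is a stationary point of the empirical risk of the original network, then for every
choice of new-neuron biases `ζ`, the point `θ̂ = β_{ζ0}(θ)` (the `β` embedding with all
outgoing weights `s = 0`) is a stationary point of the empirical risk of the enlarged
network. -/
theorem betaEmb_zero_is_critical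
    (g : ℝ → ℝ) (H : ℕ → ℕ) (L P : ℕ) (X Y : ℕ → ℕ → ℝ)
    (loss : (ℕ → ℝ) → (Fin (H L) → ℝ) → ℝ)
    (hg : Differentiable ℝ g)
    (hloss : ∀ y : ℕ → ℝ,
      Differentiable ℝ (fun z : EuclideanSpace ℝ (Fin (H L)) => loss y z))
    (l : ℕ) (hl1 : 1 ≤ l) (hlL : l + 1 ≤ L) (K : ℕ) (ζ : ℕ → ℝ) (θ : NNParams)
    (hθ : IsCritical g H L P X Y loss θ)
    (θhat : NNParams) (hemb : θhat = betaEmb g H l K ζ (fun _ _ => 0) θ) :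
    IsCritical g (enlargeH H l K) L P X Y loss θhat :=
  betaEmb_zero_is_critical_general g H L P X Y loss l hl1 hlL K ζ θ hθ θhat hemb
end

section
/- Let the activation function g and the loss ℒ (in its second argument) be differentiable, and let θ be a stationary point of the empirical risk of the original network, i.e. ∇_θ R_emp(θ) = 0. Then for every h ∈ {1,…,H_ℓ̂} and every λ_0,…,λ_K ∈ ℝ with Σ_{i=0}^K λ_i = 1, the point θ̂ = γ_λ(θ) is a stationary point of the empirical risk of the enlarged network: ∇_{θ̂} R̂_emp(θ̂) = 0. -/
-- substituted outputs: output of unit h of layer l replaced by c, layers above recomputed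
noncomputable def layerOutC (g : ℝ → ℝ) (H : ℕ → ℕ) (θ : NNParams) (x : ℕ → ℝ)
    (l h : ℕ) (c : ℝ) : ℕ → ℕ → ℝ
  | 0, i => x i
  | ℓ + 1, i =>
      if ℓ + 1 ≤ l then (if ℓ + 1 = l ∧ i = h then c else layerOut g H θ x (ℓ + 1) i)
      else g (∑ j ∈ Finset.range (H ℓ), θ.w (ℓ + 1) i j * layerOutC g H θ x l h c ℓ j
              + θ.b (ℓ + 1) i)

noncomputable def preactC (g : ℝ → ℝ) (H : ℕ → ℕ) (θ : NNParams) (x : ℕ → ℝ)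
    (l h : ℕ) (c : ℝ) (ℓ j : ℕ) : ℝ :=
  ∑ i ∈ Finset.range (H (ℓ - 1)), θ.w ℓ j i * layerOutC g H θ x l h c (ℓ - 1) i + θ.b ℓ j

lemma layerOut_succ (g H θ x ℓ j) : layerOut g H θ x (ℓ + 1) j = g (preact g H θ x (ℓ + 1) j) := rfl

lemma layerOutC_succ (g H θ x l h c ℓ j) (hl : l < ℓ + 1) :
    layerOutC g H θ x l h c (ℓ + 1) j = g (preactC g H θ x l h c (ℓ + 1) j) := by
  rw [layerOutC, if_neg (by omega)]
  rfl

lemma layerOutC_le (g H θ x l h c ℓ i) (hl : 1 ≤ l) (hℓ : ℓ ≤ l) :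
    layerOutC g H θ x l h c ℓ i = if ℓ = l ∧ i = h then c else layerOut g H θ x ℓ i := by
  cases ℓ with
  | zero => rw [if_neg (by omega)]; rfl
  | succ n => rw [layerOutC, if_pos hℓ]

lemma layerOutC_at (g H θ x l h c i) (hl : 1 ≤ l) :
    layerOutC g H θ x l h c l i = if i = h then c else layerOut g H θ x l i := by
  rw [layerOutC_le g H θ x l h c l i hl le_rfl]; simp

-- low-layer congruence
lemma layerOut_congr_low (g x) (H₁ H₂ : ℕ → ℕ) (θ₁ θ₂ : NNParams) (l₀ : ℕ)
    (hH : ∀ ℓ, ℓ < l₀ → H₁ ℓ = H₂ ℓ)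
    (hw : ∀ ℓ, 1 ≤ ℓ → ℓ < l₀ → θ₁.w ℓ = θ₂.w ℓ)
    (hb : ∀ ℓ, 1 ≤ ℓ → ℓ < l₀ → θ₁.b ℓ = θ₂.b ℓ) :
    ∀ ℓ, ℓ < l₀ → layerOut g H₁ θ₁ x ℓ = layerOut g H₂ θ₂ x ℓ := by
  intro ℓ
  induction ℓ with
  | zero => intro _; rfl
  | succ n ih =>
      intro hn
      funext i
      rw [layerOut, layerOut, hH n (by omega), hw (n+1) (by omega) hn,
        hb (n+1) (by omega) hn, ih (by omega)]

-- row formula via lower layers of the second net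
lemma layerOut_row_formula (g x) (H₁ H₂ : ℕ → ℕ) (θ₁ θ₂ : NNParams) (l : ℕ) (hl : 1 ≤ l)
    (hH : ∀ ℓ, ℓ < l → H₁ ℓ = H₂ ℓ)
    (hw : ∀ ℓ, 1 ≤ ℓ → ℓ < l → θ₁.w ℓ = θ₂.w ℓ)
    (hb : ∀ ℓ, 1 ≤ ℓ → ℓ < l → θ₁.b ℓ = θ₂.b ℓ) (r : ℕ) :
    layerOut g H₁ θ₁ x l r =
      g (∑ i ∈ Finset.range (H₂ (l - 1)), θ₁.w l r i * layerOut g H₂ θ₂ x (l - 1) i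
          + θ₁.b l r) := by
  obtain ⟨n, rfl⟩ : ∃ n, l = n + 1 := ⟨l - 1, by omega⟩
  rw [layerOut, hH n (by omega),
    layerOut_congr_low g x H₁ H₂ θ₁ θ₂ (n+1) hH hw hb n (by omega)]
  rfl

-- congruence above: plain version
lemma preact_congr (g x) (H₁ H₂ : ℕ → ℕ) (θ₁ θ₂ : NNParams) (l₀ : ℕ) (hl₀ : 1 ≤ l₀)
    (hH : ∀ ℓ, l₀ ≤ ℓ → H₁ ℓ = H₂ ℓ)
    (hw : ∀ ℓ, l₀ < ℓ → θ₁.w ℓ = θ₂.w ℓ)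
    (hb : ∀ ℓ, l₀ < ℓ → θ₁.b ℓ = θ₂.b ℓ)
    (hbase : ∀ j, preact g H₁ θ₁ x l₀ j = preact g H₂ θ₂ x l₀ j) :
    ∀ ℓ, l₀ ≤ ℓ → ∀ j, preact g H₁ θ₁ x ℓ j = preact g H₂ θ₂ x ℓ j := by
  intro ℓ
  induction ℓ with
  | zero => intro hle j; exact absurd hle (by omega)
  | succ n ih =>
      intro hle j
      rcases eq_or_lt_of_le hle with heq | hlt
      · exact heq ▸ hbase j
      · have hn : l₀ ≤ n := by omega
        obtain ⟨m, rfl⟩ : ∃ m, n = m + 1 := ⟨n - 1, by omega⟩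
        unfold preact
        rw [hw (m+1+1) (by omega), hb (m+1+1) (by omega)]
        simp only [Nat.add_sub_cancel]
        rw [hH (m+1) hn]
        congr 1
        apply Finset.sum_congr rfl
        intro i _
        rw [layerOut_succ, layerOut_succ, ih hn i]

-- congruence above: against preactC
lemma preact_congr_C (g x) (H₁ : ℕ → ℕ) (θ₁ : NNParams) (H : ℕ → ℕ) (θ : NNParams)
    (l h : ℕ) (c : ℝ) (hl : 1 ≤ l)
    (hH : ∀ ℓ, l + 1 ≤ ℓ → H₁ ℓ = H ℓ)
    (hw : ∀ ℓ, l + 1 < ℓ → θ₁.w ℓ = θ.w ℓ)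
    (hb : ∀ ℓ, l + 1 < ℓ → θ₁.b ℓ = θ.b ℓ)
    (hbase : ∀ j, preact g H₁ θ₁ x (l+1) j = preactC g H θ x l h c (l+1) j) :
    ∀ ℓ, l + 1 ≤ ℓ → ∀ j, preact g H₁ θ₁ x ℓ j = preactC g H θ x l h c ℓ j := by
  intro ℓ
  induction ℓ with
  | zero => intro hle j; exact absurd hle (by omega)
  | succ n ih =>
      intro hle j
      rcases eq_or_lt_of_le hle with heq | hlt
      · exact heq ▸ hbase j
      · have hn : l + 1 ≤ n := by omega
        obtain ⟨m, rfl⟩ : ∃ m, n = m + 1 := ⟨n - 1, by omega⟩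
        unfold preact preactC
        rw [hw (m+1+1) (by omega), hb (m+1+1) (by omega)]
        simp only [Nat.add_sub_cancel]
        rw [hH (m+1) hn]
        congr 1
        apply Finset.sum_congr rfl
        intro i _
        rw [layerOut_succ, layerOutC_succ g H θ x l h c m i (by omega), ih hn i]

-- consistency: substituting the true value changes nothing
lemma layerOutC_self (g H θ x l h) (hl : 1 ≤ l) :
    ∀ ℓ i, layerOutC g H θ x l h (layerOut g H θ x l h) ℓ i = layerOut g H θ x ℓ i := by
  intro ℓ
  induction ℓ with
  | zero => intro i; rfl
  | succ n ih =>
      intro i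
      by_cases hle : n + 1 ≤ l
      · rw [layerOutC, if_pos hle]
        split
        · next hc => rw [hc.1, hc.2]
        · rfl
      · rw [layerOutC, if_neg hle, layerOut]
        congr 1
        congr 1
        exact Finset.sum_congr rfl fun j _ => by rw [ih]

lemma preactC_self (g H θ x l h ℓ j) (hl : 1 ≤ l) :
    preactC g H θ x l h (layerOut g H θ x l h) ℓ j = preact g H θ x ℓ j := by
  unfold preactC preact
  congr 1
  exact Finset.sum_congr rfl fun i _ => by rw [layerOutC_self g H θ x l h hl]

-- differentiability in c
lemma layerOutC_diff (g : ℝ → ℝ) (hg : Differentiable ℝ g) (H θ x l h) :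
    ∀ ℓ i, Differentiable ℝ (fun c => layerOutC g H θ x l h c ℓ i) := by
  intro ℓ
  induction ℓ with
  | zero => intro i; simp only [layerOutC]; exact differentiable_const _
  | succ n ih =>
      intro i
      by_cases hle : n + 1 ≤ l
      · simp only [layerOutC, if_pos hle]
        split
        · exact differentiable_id
        · exact differentiable_const _
      · simp only [layerOutC, if_neg hle]
        apply hg.comp
        apply Differentiable.add_const
        apply Differentiable.fun_sum
        intro j _
        exact (ih j).const_mul _

lemma preactC_diff (g : ℝ → ℝ) (hg : Differentiable ℝ g) (H θ x l h ℓ j) :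
    Differentiable ℝ (fun c => preactC g H θ x l h c ℓ j) := by
  unfold preactC
  apply Differentiable.add_const
  apply Differentiable.fun_sum
  intro i _
  exact (layerOutC_diff g hg H θ x l h _ i).const_mul _

-- composing loss with a differentiable curve
lemma loss_comp_diff {m : ℕ} (loss' : (Fin m → ℝ) → ℝ)
    (hl : Differentiable ℝ (fun z : EuclideanSpace ℝ (Fin m) => loss' z))
    (q : Fin m → ℝ → ℝ) (hq : ∀ r, Differentiable ℝ (q r)) :
    Differentiable ℝ (fun c => loss' (fun r => q r c)) := by
  have h1 : Differentiable ℝ (fun c => (fun r => q r c) : ℝ → (Fin m → ℝ)) :=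
    differentiable_pi.mpr hq
  have h2 : Differentiable ℝ
      (fun c => (EuclideanSpace.equiv (Fin m) ℝ).symm (fun r => q r c)) :=
    ((EuclideanSpace.equiv (Fin m) ℝ).symm.differentiable).comp h1
  exact hl.comp h2

-- the key derivative lemma
lemma key_deriv (g : ℝ → ℝ) (hg : Differentiable ℝ g) (P : ℕ) (Φ : ℕ → ℝ → ℝ)
    (hΦ : ∀ p, Differentiable ℝ (Φ p)) (A : ℕ → ℝ → ℝ) (s : ℕ → ℝ)
    (hA : ∀ p t, HasDerivAt (A p) (s p) t) (w₀ : ℝ) (c₀ : ℕ → ℝ)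
    (hc : ∀ p, g (A p w₀) = c₀ p) (μ : ℝ)
    (h0 : deriv (fun t => (1 / (P:ℝ)) * ∑ p ∈ Finset.range P, Φ p (g (A p t))) w₀ = 0) :
    deriv (fun t => (1 / (P:ℝ)) * ∑ p ∈ Finset.range P,
      Φ p ((1 - μ) * c₀ p + μ * g (A p t))) w₀ = 0 := by
  set d : ℕ → ℝ := fun p => deriv (Φ p) (c₀ p) * (deriv g (A p w₀) * s p) with hd
  have hgA : ∀ p, HasDerivAt (fun t => g (A p t)) (deriv g (A p w₀) * s p) w₀ := fun p =>
    ((hg (A p w₀)).hasDerivAt).comp w₀ (hA p w₀)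
  have hΦd : ∀ p, HasDerivAt (Φ p) (deriv (Φ p) (c₀ p)) (c₀ p) := fun p =>
    (hΦ p (c₀ p)).hasDerivAt
  have H1 : HasDerivAt (fun t => (1 / (P:ℝ)) * ∑ p ∈ Finset.range P, Φ p (g (A p t)))
      ((1 / (P:ℝ)) * ∑ p ∈ Finset.range P, d p) w₀ := by
    apply HasDerivAt.const_mul
    apply HasDerivAt.fun_sum
    intro p _
    have := ((hΦ p (g (A p w₀))).hasDerivAt).comp w₀ (hgA p)
    simpa [Function.comp_def, hc p] using this
  have hsum0 : (1 / (P:ℝ)) * ∑ p ∈ Finset.range P, d p = 0 := by rw [← H1.deriv]; exact h0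
  have H2 : HasDerivAt (fun t => (1 / (P:ℝ)) * ∑ p ∈ Finset.range P,
      Φ p ((1 - μ) * c₀ p + μ * g (A p t))) (μ * ((1 / (P:ℝ)) * ∑ p ∈ Finset.range P, d p)) w₀ := by
    have : HasDerivAt (fun t => (1 / (P:ℝ)) * ∑ p ∈ Finset.range P,
        Φ p ((1 - μ) * c₀ p + μ * g (A p t)))
        ((1 / (P:ℝ)) * ∑ p ∈ Finset.range P, deriv (Φ p) (c₀ p) * (μ * (deriv g (A p w₀) * s p))) w₀ := by
      apply HasDerivAt.const_mul
      apply HasDerivAt.fun_sum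
      intro p _
      have hin : HasDerivAt (fun t => (1 - μ) * c₀ p + μ * g (A p t))
          (μ * (deriv g (A p w₀) * s p)) w₀ := ((hgA p).const_mul μ).const_add _
      have hval : (1 - μ) * c₀ p + μ * g (A p w₀) = c₀ p := by rw [hc p]; ring
      have := ((hΦ p ((1 - μ) * c₀ p + μ * g (A p w₀))).hasDerivAt).comp w₀ hin
      simpa [Function.comp_def, hval] using this
    convert this using 1
    rw [Finset.mul_sum, Finset.mul_sum, Finset.mul_sum]
    exact Finset.sum_congr rfl fun p _ => by rw [hd]; ring
  rw [H2.deriv, hsum0, mul_zero]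


-- generic group-sum lemma
lemma sum_group (n K h : ℕ) (hh : h < n) (f f' : ℕ → ℝ)
    (h1 : ∀ i, i < n → i ≠ h → f i = f' i)
    (h2 : f h + ∑ k ∈ Finset.range K, f (n + k) = f' h) :
    ∑ i ∈ Finset.range (n + K), f i = ∑ i ∈ Finset.range n, f' i := by
  have hm : h ∈ Finset.range n := Finset.mem_range.mpr hh
  rw [Finset.sum_range_add, ← Finset.sum_erase_add _ f hm, ← Finset.sum_erase_add _ f' hm,
    add_assoc, h2]
  congr 1
  exact Finset.sum_congr rfl fun i hi => by
    rw [Finset.mem_erase] at hi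
    exact h1 i (Finset.mem_range.mp hi.2) hi.1

lemma ite_sum_trick (Kn k0 : ℕ) (hk : k0 < Kn) (a : ℕ → ℝ) (G c : ℝ) :
    ∑ k ∈ Finset.range Kn, a k * (if k = k0 then G else c)
      = (∑ k ∈ Finset.range Kn, a k) * c + a k0 * (G - c) := by
  have : ∀ k ∈ Finset.range Kn, a k * (if k = k0 then G else c)
      = a k * c + (if k = k0 then a k0 * (G - c) else 0) := by
    intro k _
    split_ifs with hkk
    · subst hkk; ring
    · ring
  rw [Finset.sum_congr rfl this, Finset.sum_add_distrib, Finset.sum_ite_eq' _ k0, if_pos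
    (Finset.mem_range.mpr hk), ← Finset.sum_mul]

lemma NNParams.ext2 {a b : NNParams} (hw : ∀ ℓ j i, a.w ℓ j i = b.w ℓ j i)
    (hb : ∀ ℓ j, a.b ℓ j = b.b ℓ j) : a = b := by
  cases a; cases b
  simp only [NNParams.mk.injEq]
  constructor <;> funext ℓ j <;> try funext i
  all_goals apply_assumption

section Gamma

variable (g : ℝ → ℝ) (H : ℕ → ℕ) (θ : NNParams) (l h K : ℕ) (lam : ℕ → ℝ)

lemma enlargeH_ne {ℓ : ℕ} (hℓ : ℓ ≠ l) : enlargeH H l K ℓ = H ℓ := by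
  simp [enlargeH, hℓ]

lemma gamma_w_ne {ℓ : ℕ} (h1 : ℓ ≠ l) (h2 : ℓ ≠ l + 1) :
    (gammaEmb H l K h lam θ).w ℓ = θ.w ℓ := by
  funext j i; simp [gammaEmb, h1, h2]

lemma gamma_b_ne {ℓ : ℕ} (h1 : ℓ ≠ l) :
    (gammaEmb H l K h lam θ).b ℓ = θ.b ℓ := by
  funext j; simp [gammaEmb, h1]

lemma gamma_w_row_lt {r : ℕ} (hr : r < H l) :
    (gammaEmb H l K h lam θ).w l r = θ.w l r := by
  funext i; simp only [gammaEmb]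
  split_ifs with h1 h2 h3
  · exact absurd h1 (by omega)
  · exact absurd h2 (by omega)
  · exact absurd h3 (by omega)
  · rfl

lemma gamma_w_row_ge {r : ℕ} (hr : H l ≤ r) :
    (gammaEmb H l K h lam θ).w l r = θ.w l h := by
  funext i; simp [gammaEmb, hr]

lemma gamma_b_row_lt {r : ℕ} (hr : r < H l) :
    (gammaEmb H l K h lam θ).b l r = θ.b l r := by
  simp only [gammaEmb]
  split_ifs with h1
  · exact absurd h1 (by omega)
  · rfl

lemma gamma_b_row_ge {r : ℕ} (hr : H l ≤ r) :
    (gammaEmb H l K h lam θ).b l r = θ.b l h := by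
  simp [gammaEmb, hr]

lemma gamma_w_out_h {j : ℕ} :
    (gammaEmb H l K h lam θ).w (l+1) j h = lam 0 * θ.w (l+1) j h := by
  simp only [gammaEmb]
  split_ifs with h1 h2 h3
  · exact absurd h1 (by omega)
  · rfl
  · simp at h2
  · simp at h2

lemma gamma_w_out_new {j k : ℕ} (hh : h < H l) :
    (gammaEmb H l K h lam θ).w (l+1) j (H l + k) = lam (k+1) * θ.w (l+1) j h := by
  simp only [gammaEmb]
  split_ifs with h1 h2 h3
  · exact absurd h1 (by omega)
  · exact absurd h2 (by omega)
  · have hk : H l + k - H l = k := by omega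
    rw [hk]
  · exact absurd (by simp) h3

lemma gamma_w_out_old {j i : ℕ} (hi : i < H l) (hih : i ≠ h) :
    (gammaEmb H l K h lam θ).w (l+1) j i = θ.w (l+1) j i := by
  simp only [gammaEmb]
  split_ifs with h1 h2 h3
  · exact absurd h1 (by omega)
  · exact absurd h2 (by omega)
  · exact absurd h3 (by omega)
  · rfl

end Gamma


lemma ite_sum_trick2 (Kn k0 : ℕ) (hk : k0 < Kn) (a : ℕ → ℝ) (tval : ℝ) :
    ∑ k ∈ Finset.range Kn, (if k = k0 then tval else a k)
      = (∑ k ∈ Finset.range Kn, a k) + (tval - a k0) := by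
  have : ∀ k ∈ Finset.range Kn, (if k = k0 then tval else a k)
      = a k + (if k = k0 then tval - a k0 else 0) := by
    intro k _
    split_ifs with hkk
    · subst hkk; ring
    · ring
  rw [Finset.sum_congr rfl this, Finset.sum_add_distrib, Finset.sum_ite_eq' _ k0,
    if_pos (Finset.mem_range.mpr hk)]

lemma layerOut_eq_g_preact (g : ℝ → ℝ) (H : ℕ → ℕ) (θ : NNParams) (x : ℕ → ℝ) {l r : ℕ}
    (hl : 1 ≤ l) : layerOut g H θ x l r = g (preact g H θ x l r) := by
  obtain ⟨m, rfl⟩ : ∃ m, l = m + 1 := ⟨l - 1, by omega⟩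
  rfl

section Gamma2

variable (g : ℝ → ℝ) (H : ℕ → ℕ) (θ : NNParams) (l h K : ℕ) (lam : ℕ → ℝ)

lemma enl_row_val (x : ℕ → ℝ) (θ₁ : NNParams) (hl : 1 ≤ l)
    (hw : ∀ ℓ, 1 ≤ ℓ → ℓ < l → θ₁.w ℓ = θ.w ℓ) (hb : ∀ ℓ, 1 ≤ ℓ → ℓ < l → θ₁.b ℓ = θ.b ℓ)
    (r : ℕ) :
    layerOut g (enlargeH H l K) θ₁ x l r
      = g (∑ i ∈ Finset.range (H (l-1)), θ₁.w l r i * layerOut g H θ x (l-1) i + θ₁.b l r) :=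
  layerOut_row_formula g x _ H θ₁ θ l hl (fun ℓ hℓ => enlargeH_ne H l K (by omega)) hw hb r

lemma orig_row_val (x : ℕ → ℝ) (θ₁ : NNParams) (hl : 1 ≤ l)
    (hw : ∀ ℓ, 1 ≤ ℓ → ℓ < l → θ₁.w ℓ = θ.w ℓ) (hb : ∀ ℓ, 1 ≤ ℓ → ℓ < l → θ₁.b ℓ = θ.b ℓ)
    (r : ℕ) :
    layerOut g H θ₁ x l r
      = g (∑ i ∈ Finset.range (H (l-1)), θ₁.w l r i * layerOut g H θ x (l-1) i + θ₁.b l r) :=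
  layerOut_row_formula g x H H θ₁ θ l hl (fun _ _ => rfl) hw hb r

lemma lam_tail_sum (hlam : ∑ i ∈ Finset.range (K+1), lam i = 1) :
    lam 0 + ∑ k ∈ Finset.range K, lam (k+1) = 1 := by
  rw [Finset.sum_range_succ'] at hlam
  linarith

/-- The key layer-(l+1) base computation, for a parameter set `θ₁` that agrees with
`γ θ` everywhere except possibly on row `r0` of layer `l` (a member of the duplicate
group), whose output is `G`. -/
lemma BD_preact (hl : 1 ≤ l) (hh : h < H l)
    (hlam : ∑ i ∈ Finset.range (K+1), lam i = 1)
    (x : ℕ → ℝ) (θ₁ : NNParams) (r0 : ℕ) (μ G : ℝ)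
    (hr : (r0 = h ∧ μ = lam 0) ∨ ∃ k, k < K ∧ r0 = H l + k ∧ μ = lam (k+1))
    (hw_up : ∀ ℓ, ℓ ≠ l → θ₁.w ℓ = (gammaEmb H l K h lam θ).w ℓ)
    (hb_up : ∀ ℓ, ℓ ≠ l → θ₁.b ℓ = (gammaEmb H l K h lam θ).b ℓ)
    (hrow_w : ∀ r, r ≠ r0 → θ₁.w l r = (gammaEmb H l K h lam θ).w l r)
    (hrow_b : ∀ r, r ≠ r0 → θ₁.b l r = (gammaEmb H l K h lam θ).b l r)
    (hval : layerOut g (enlargeH H l K) θ₁ x l r0 = G) :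
    ∀ ℓ, l + 1 ≤ ℓ → ∀ j, preact g (enlargeH H l K) θ₁ x ℓ j
      = preactC g H θ x l h ((1 - μ) * layerOut g H θ x l h + μ * G) ℓ j := by
  have hwlow : ∀ ℓ, 1 ≤ ℓ → ℓ < l → θ₁.w ℓ = θ.w ℓ := fun ℓ a b =>
    (hw_up ℓ (by omega)).trans (gamma_w_ne H θ l h K lam (by omega) (by omega))
  have hblow : ∀ ℓ, 1 ≤ ℓ → ℓ < l → θ₁.b ℓ = θ.b ℓ := fun ℓ a b =>
    (hb_up ℓ (by omega)).trans (gamma_b_ne H θ l h K lam (by omega))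
  -- outputs of layer l
  have hA : ∀ r, r < H l → r ≠ r0 →
      layerOut g (enlargeH H l K) θ₁ x l r = layerOut g H θ x l r := by
    intro r hrlt hrne
    rw [enl_row_val g H θ l K x θ₁ hl hwlow hblow r, hrow_w r hrne,
      gamma_w_row_lt H θ l h K lam hrlt, hrow_b r hrne, gamma_b_row_lt H θ l h K lam hrlt,
      layerOut_eq_g_preact g H θ x hl]
    rfl
  have hAge : ∀ r, H l ≤ r → r ≠ r0 →
      layerOut g (enlargeH H l K) θ₁ x l r = layerOut g H θ x l h := by
    intro r hrge hrne
    rw [enl_row_val g H θ l K x θ₁ hl hwlow hblow r, hrow_w r hrne,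
      gamma_w_row_ge H θ l h K lam hrge, hrow_b r hrne, gamma_b_row_ge H θ l h K lam hrge,
      layerOut_eq_g_preact g H θ x hl]
    rfl
  apply preact_congr_C g x _ θ₁ H θ l h _ hl
  · intro ℓ hℓ; exact enlargeH_ne H l K (by omega)
  · intro ℓ hℓ
    exact (hw_up ℓ (by omega)).trans (gamma_w_ne H θ l h K lam (by omega) (by omega))
  · intro ℓ hℓ
    exact (hb_up ℓ (by omega)).trans (gamma_b_ne H θ l h K lam (by omega))
  · intro j
    unfold preact preactC
    simp only [Nat.add_sub_cancel]
    rw [hw_up (l+1) (by omega), hb_up (l+1) (by omega), gamma_b_ne H θ l h K lam (by omega)]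
    rw [show enlargeH H l K l = H l + K from by simp [enlargeH]]
    congr 1
    apply sum_group (H l) K h hh
    · intro i hi hih
      have hir0 : i ≠ r0 := by
        rcases hr with ⟨rfl, _⟩ | ⟨k, hk, rfl, _⟩
        · exact hih
        · omega
      rw [gamma_w_out_old H θ l h K lam hi hih, hA i hi hir0,
        layerOutC_at g H θ x l h _ i hl, if_neg hih]
    · rw [layerOutC_at g H θ x l h _ h hl, if_pos rfl]
      have hS := lam_tail_sum K lam hlam
      rcases hr with ⟨he, hμ⟩ | ⟨k0, hk0, he, hμ⟩
      · -- r0 = h : perturbed unit is h itself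
        have hvalh : layerOut g (enlargeH H l K) θ₁ x l h = G := he ▸ hval
        rw [gamma_w_out_h H θ l h K lam, hvalh]
        have hgrp : ∀ k ∈ Finset.range K,
            (gammaEmb H l K h lam θ).w (l+1) j (H l + k)
              * layerOut g (enlargeH H l K) θ₁ x l (H l + k)
            = lam (k+1) * (θ.w (l+1) j h * layerOut g H θ x l h) := by
          intro k _
          rw [gamma_w_out_new H θ l h K lam hh, hAge (H l + k) (by omega) (by omega)]
          ring
        rw [Finset.sum_congr rfl hgrp, ← Finset.sum_mul, hμ]
        linear_combination (θ.w (l+1) j h * layerOut g H θ x l h) * hS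
      · -- r0 = H l + k0 : perturbed unit is the k0-th copy
        subst he
        rw [gamma_w_out_h H θ l h K lam, hA h hh (by omega)]
        have hgrp : ∀ k ∈ Finset.range K,
            (gammaEmb H l K h lam θ).w (l+1) j (H l + k)
              * layerOut g (enlargeH H l K) θ₁ x l (H l + k)
            = lam (k+1) * θ.w (l+1) j h
                * (if k = k0 then G else layerOut g H θ x l h) := by
          intro k _
          rw [gamma_w_out_new H θ l h K lam hh]
          by_cases hkk : k = k0
          · subst hkk; rw [if_pos rfl, hval]
          · rw [if_neg hkk, hAge (H l + k) (by omega) (by omega)]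
        rw [Finset.sum_congr rfl hgrp, ite_sum_trick K k0 hk0 _ _ _, ← Finset.sum_mul, hμ]
        linear_combination (θ.w (l+1) j h * layerOut g H θ x l h) * hS

end Gamma2


lemma updW_w_ne (θ : NNParams) (a b c : ℕ) (t : ℝ) {ℓ : ℕ} (hne : ℓ ≠ a) :
    (updW θ a b c t).w ℓ = θ.w ℓ := by
  funext j i; simp [updW, hne]

lemma updW_w_at (θ : NNParams) (a b c : ℕ) (t : ℝ) (r i : ℕ) :
    (updW θ a b c t).w a r i = if r = b ∧ i = c then t else θ.w a r i := by
  simp [updW]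

lemma updB_b_ne (θ : NNParams) (a b : ℕ) (t : ℝ) {ℓ : ℕ} (hne : ℓ ≠ a) :
    (updB θ a b t).b ℓ = θ.b ℓ := by
  funext j; simp [updB, hne]

lemma updW_w_row_ne (θ : NNParams) (a b c : ℕ) (t : ℝ) {r : ℕ} (hne : r ≠ b) :
    (updW θ a b c t).w a r = θ.w a r := by
  funext i; simp [updW, hne]

lemma updB_b_row_ne (θ : NNParams) (a b : ℕ) (t : ℝ) {r : ℕ} (hne : r ≠ b) :
    (updB θ a b t).b a r = θ.b a r := by
  simp [updB, hne]

lemma updB_b_at (θ : NNParams) (a b : ℕ) (t : ℝ) (r : ℕ) :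
    (updB θ a b t).b a r = if r = b then t else θ.b a r := by
  simp [updB]

section Gamma3

variable (g : ℝ → ℝ) (H : ℕ → ℕ) (θ : NNParams) (l h K : ℕ) (lam : ℕ → ℝ)

lemma gamma_preact_eq (hl : 1 ≤ l) (hh : h < H l)
    (hlam : ∑ i ∈ Finset.range (K+1), lam i = 1) (θ' : NNParams) (x : ℕ → ℝ) :
    ∀ ℓ, l + 1 ≤ ℓ → ∀ j,
      preact g (enlargeH H l K) (gammaEmb H l K h lam θ') x ℓ j = preact g H θ' x ℓ j := by
  have hwlow : ∀ ℓ, 1 ≤ ℓ → ℓ < l → (gammaEmb H l K h lam θ').w ℓ = θ'.w ℓ :=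
    fun ℓ a b => gamma_w_ne H θ' l h K lam (by omega) (by omega)
  have hblow : ∀ ℓ, 1 ≤ ℓ → ℓ < l → (gammaEmb H l K h lam θ').b ℓ = θ'.b ℓ :=
    fun ℓ a b => gamma_b_ne H θ' l h K lam (by omega)
  have hrow_lt : ∀ r, r < H l →
      layerOut g (enlargeH H l K) (gammaEmb H l K h lam θ') x l r = layerOut g H θ' x l r := by
    intro r hrlt
    rw [enl_row_val g H θ' l K x _ hl hwlow hblow r, gamma_w_row_lt H θ' l h K lam hrlt,
      gamma_b_row_lt H θ' l h K lam hrlt, layerOut_eq_g_preact g H θ' x hl]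
    rfl
  have hrow_ge : ∀ r, H l ≤ r →
      layerOut g (enlargeH H l K) (gammaEmb H l K h lam θ') x l r = layerOut g H θ' x l h := by
    intro r hrge
    rw [enl_row_val g H θ' l K x _ hl hwlow hblow r, gamma_w_row_ge H θ' l h K lam hrge,
      gamma_b_row_ge H θ' l h K lam hrge, layerOut_eq_g_preact g H θ' x hl]
    rfl
  apply preact_congr g x _ H _ θ' (l+1) (by omega)
  · intro ℓ hℓ; exact enlargeH_ne H l K (by omega)
  · intro ℓ hℓ; exact gamma_w_ne H θ' l h K lam (by omega) (by omega)
  · intro ℓ hℓ; exact gamma_b_ne H θ' l h K lam (by omega)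
  · intro j
    unfold preact
    simp only [Nat.add_sub_cancel]
    rw [gamma_b_ne H θ' l h K lam (by omega)]
    rw [show enlargeH H l K l = H l + K from by simp [enlargeH]]
    congr 1
    apply sum_group (H l) K h hh
    · intro i hi hih
      rw [gamma_w_out_old H θ' l h K lam hi hih, hrow_lt i hi]
    · rw [gamma_w_out_h H θ' l h K lam, hrow_lt h hh]
      have hgrp : ∀ k ∈ Finset.range K,
          (gammaEmb H l K h lam θ').w (l+1) j (H l + k)
            * layerOut g (enlargeH H l K) (gammaEmb H l K h lam θ') x l (H l + k)
          = lam (k+1) * (θ'.w (l+1) j h * layerOut g H θ' x l h) := by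
        intro k _
        rw [gamma_w_out_new H θ' l h K lam hh, hrow_ge (H l + k) (by omega)]
        ring
      rw [Finset.sum_congr rfl hgrp, ← Finset.sum_mul]
      linear_combination (θ'.w (l+1) j h * layerOut g H θ' x l h) * (lam_tail_sum K lam hlam)

lemma gamma_Remp_eq (hl : 1 ≤ l) (hh : h < H l)
    (hlam : ∑ i ∈ Finset.range (K+1), lam i = 1)
    (L P : ℕ) {m : ℕ} (X Y : ℕ → ℕ → ℝ) (loss : (ℕ → ℝ) → (Fin m → ℝ) → ℝ)
    (hlL : l + 1 ≤ L) (θ' : NNParams) :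
    Remp g (enlargeH H l K) L P X Y loss (gammaEmb H l K h lam θ')
      = Remp g H L P X Y loss θ' := by
  unfold Remp
  congr 1
  apply Finset.sum_congr rfl
  intro p _
  congr 1
  funext r
  exact gamma_preact_eq g H l h K lam hl hh hlam θ' (X p) L hlL r

lemma C_preact (hl : 1 ≤ l) (hh : h < H l)
    (hlam : ∑ i ∈ Finset.range (K+1), lam i = 1) (x : ℕ → ℝ) (j0 i0 : ℕ) (μ : ℝ)
    (hi0 : (i0 = h ∧ μ = lam 0) ∨ ∃ k, k < K ∧ i0 = H l + k ∧ μ = lam (k+1)) (t : ℝ) :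
    ∀ ℓ, l + 1 ≤ ℓ → ∀ j,
      preact g (enlargeH H l K) (updW (gammaEmb H l K h lam θ) (l+1) j0 i0 t) x ℓ j
        = preact g H (updW θ (l+1) j0 h (t + (1 - μ) * θ.w (l+1) j0 h)) x ℓ j := by
  have hS := lam_tail_sum K lam hlam
  set s0 : ℝ := t + (1 - μ) * θ.w (l+1) j0 h with hs0
  set θ₁ : NNParams := updW (gammaEmb H l K h lam θ) (l+1) j0 i0 t with hθ₁
  set θ₂ : NNParams := updW θ (l+1) j0 h s0 with hθ₂
  have hθ₁w : ∀ ℓ, ℓ ≠ l + 1 → θ₁.w ℓ = (gammaEmb H l K h lam θ).w ℓ :=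
    fun ℓ hℓ => updW_w_ne _ _ _ _ _ hℓ
  have hθ₂w : ∀ ℓ, ℓ ≠ l + 1 → θ₂.w ℓ = θ.w ℓ := fun ℓ hℓ => updW_w_ne _ _ _ _ _ hℓ
  have hθ₁b : ∀ ℓ, ℓ ≠ l → θ₁.b ℓ = θ.b ℓ := fun ℓ hℓ => gamma_b_ne H θ l h K lam hℓ
  have hwlow : ∀ ℓ, 1 ≤ ℓ → ℓ < l → θ₁.w ℓ = θ.w ℓ := fun ℓ a b =>
    (hθ₁w ℓ (by omega)).trans (gamma_w_ne H θ l h K lam (by omega) (by omega))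
  have hblow : ∀ ℓ, 1 ≤ ℓ → ℓ < l → θ₁.b ℓ = θ.b ℓ := fun ℓ a b =>
    gamma_b_ne H θ l h K lam (by omega)
  have hw2low : ∀ ℓ, 1 ≤ ℓ → ℓ < l → θ₂.w ℓ = θ.w ℓ := fun ℓ a b => hθ₂w ℓ (by omega)
  have hb2low : ∀ ℓ, 1 ≤ ℓ → ℓ < l → θ₂.b ℓ = θ.b ℓ := fun ℓ a b => rfl
  have hrow_lt : ∀ r, r < H l →
      layerOut g (enlargeH H l K) θ₁ x l r = layerOut g H θ x l r := by
    intro r hrlt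
    rw [enl_row_val g H θ l K x _ hl hwlow hblow r, hθ₁w l (by omega),
      gamma_w_row_lt H θ l h K lam hrlt,
      show θ₁.b l r = θ.b l r from gamma_b_row_lt H θ l h K lam hrlt,
      layerOut_eq_g_preact g H θ x hl]
    rfl
  have hrow_ge : ∀ r, H l ≤ r →
      layerOut g (enlargeH H l K) θ₁ x l r = layerOut g H θ x l h := by
    intro r hrge
    rw [enl_row_val g H θ l K x _ hl hwlow hblow r, hθ₁w l (by omega),
      gamma_w_row_ge H θ l h K lam hrge,
      show θ₁.b l r = θ.b l h from gamma_b_row_ge H θ l h K lam hrge,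
      layerOut_eq_g_preact g H θ x hl]
    rfl
  have hrow2 : ∀ r, layerOut g H θ₂ x l r = layerOut g H θ x l r := by
    intro r
    rw [orig_row_val g H θ l x θ₂ hl hw2low hb2low r, hθ₂w l (by omega),
      show θ₂.b l r = θ.b l r from rfl, layerOut_eq_g_preact g H θ x hl]
    rfl
  apply preact_congr g x _ H θ₁ θ₂ (l+1) (by omega)
  · intro ℓ hℓ; exact enlargeH_ne H l K (by omega)
  · intro ℓ hℓ
    rw [hθ₁w ℓ (by omega), gamma_w_ne H θ l h K lam (by omega) (by omega), ← hθ₂w ℓ (by omega)]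
  · intro ℓ hℓ
    rw [hθ₁b ℓ (by omega)]
    rfl
  · intro j
    unfold preact
    simp only [Nat.add_sub_cancel]
    rw [show enlargeH H l K l = H l + K from by simp [enlargeH]]
    rw [show θ₁.b (l+1) j = θ.b (l+1) j from hθ₁b (l+1) (by omega) ▸ rfl]
    rw [show θ₂.b (l+1) j = θ.b (l+1) j from rfl]
    congr 1
    apply sum_group (H l) K h hh
    · intro i hi hih
      have e1 : θ₁.w (l+1) j i = θ.w (l+1) j i := by
        rw [hθ₁, updW_w_at,
          if_neg (by
            rintro ⟨-, rfl⟩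
            rcases hi0 with ⟨rfl, -⟩ | ⟨k, hk, rfl, -⟩
            · exact hih rfl
            · omega)]
        exact gamma_w_out_old H θ l h K lam hi hih
      have e2 : θ₂.w (l+1) j i = θ.w (l+1) j i := by
        rw [hθ₂, updW_w_at, if_neg (by rintro ⟨-, rfl⟩; exact hih rfl)]
      rw [e1, e2, hrow_lt i hi, hrow2 i]
    · rw [hrow_lt h hh, hrow2 h]
      have f1 : θ₁.w (l+1) j h
          = if j = j0 ∧ h = i0 then t else lam 0 * θ.w (l+1) j h := by
        rw [hθ₁, updW_w_at]
        by_cases c : j = j0 ∧ h = i0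
        · rw [if_pos c, if_pos c]
        · rw [if_neg c, if_neg c, gamma_w_out_h H θ l h K lam]
      have f2 : θ₂.w (l+1) j h = if j = j0 then s0 else θ.w (l+1) j h := by
        rw [hθ₂, updW_w_at]
        by_cases c : j = j0
        · rw [if_pos (by exact ⟨c, rfl⟩), if_pos c]
        · rw [if_neg (by tauto), if_neg c]
      have hgrp : ∀ k ∈ Finset.range K,
          θ₁.w (l+1) j (H l + k) * layerOut g (enlargeH H l K) θ₁ x l (H l + k)
          = (if j = j0 ∧ H l + k = i0 then t else lam (k+1) * θ.w (l+1) j h)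
              * layerOut g H θ x l h := by
        intro k _
        rw [hrow_ge (H l + k) (by omega)]
        congr 1
        rw [hθ₁, updW_w_at]
        by_cases c : j = j0 ∧ H l + k = i0
        · rw [if_pos c, if_pos c]
        · rw [if_neg c, if_neg c, gamma_w_out_new H θ l h K lam hh]
      rw [Finset.sum_congr rfl hgrp, f1, f2]
      set o := layerOut g H θ x l h with ho
      set w := θ.w (l+1) j h with hw
      by_cases hj : j = j0
      · subst hj
        rcases hi0 with ⟨hi0h, hμ⟩ | ⟨k0, hk0, hi0e, hμ⟩
        · -- i0 = h
          rw [if_pos ⟨rfl, hi0h.symm⟩, if_pos rfl]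
          have : ∀ k ∈ Finset.range K,
              (if j = j ∧ H l + k = i0 then t else lam (k+1) * w) * o
                = lam (k+1) * (w * o) := by
            intro k _
            rw [if_neg (by rintro ⟨-, he⟩; omega)]
            ring
          rw [Finset.sum_congr rfl this, ← Finset.sum_mul, hs0, hμ]
          linear_combination (w * o) * hS
        · -- i0 = H l + k0
          rw [if_neg (by rintro ⟨-, he⟩; omega), if_pos rfl]
          have : ∀ k ∈ Finset.range K,
              (if j = j ∧ H l + k = i0 then t else lam (k+1) * w) * o
                = (if k = k0 then t * o else lam (k+1) * (w * o)) := by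
            intro k _
            by_cases hkk : k = k0
            · subst hkk; rw [if_pos ⟨rfl, by omega⟩, if_pos rfl]
            · rw [if_neg (by rintro ⟨-, he⟩; omega), if_neg hkk]
              ring
          rw [Finset.sum_congr rfl this, ite_sum_trick2 K k0 hk0 _ _, ← Finset.sum_mul,
            hs0, hμ]
          linear_combination (w * o) * hS
      · rw [if_neg (by tauto), if_neg hj]
        have : ∀ k ∈ Finset.range K,
            (if j = j0 ∧ H l + k = i0 then t else lam (k+1) * w) * o
              = lam (k+1) * (w * o) := by
          intro k _
          rw [if_neg (by tauto)]
          ring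
        rw [Finset.sum_congr rfl this, ← Finset.sum_mul]
        linear_combination (w * o) * hS

lemma C_Remp_eq (hl : 1 ≤ l) (hh : h < H l)
    (hlam : ∑ i ∈ Finset.range (K+1), lam i = 1)
    (L P : ℕ) {m : ℕ} (X Y : ℕ → ℕ → ℝ) (loss : (ℕ → ℝ) → (Fin m → ℝ) → ℝ)
    (hlL : l + 1 ≤ L) (j0 i0 : ℕ) (μ : ℝ)
    (hi0 : (i0 = h ∧ μ = lam 0) ∨ ∃ k, k < K ∧ i0 = H l + k ∧ μ = lam (k+1)) (t : ℝ) :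
    Remp g (enlargeH H l K) L P X Y loss (updW (gammaEmb H l K h lam θ) (l+1) j0 i0 t)
      = Remp g H L P X Y loss (updW θ (l+1) j0 h (t + (1 - μ) * θ.w (l+1) j0 h)) := by
  unfold Remp
  congr 1
  apply Finset.sum_congr rfl
  intro p _
  congr 1
  funext r
  exact C_preact g H θ l h K lam hl hh hlam (X p) j0 i0 μ hi0 t L hlL r

end Gamma3


noncomputable def Aval (g : ℝ → ℝ) (H : ℕ → ℕ) (θ : NNParams) (l h : ℕ) (x : ℕ → ℝ)
    (i0 : ℕ) (t : ℝ) : ℝ :=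
  ∑ i ∈ Finset.range (H (l-1)), (if i = i0 then t else θ.w l h i) * layerOut g H θ x (l-1) i
    + θ.b l h

noncomputable def Bval (g : ℝ → ℝ) (H : ℕ → ℕ) (θ : NNParams) (l h : ℕ) (x : ℕ → ℝ)
    (t : ℝ) : ℝ :=
  ∑ i ∈ Finset.range (H (l-1)), θ.w l h i * layerOut g H θ x (l-1) i + t

lemma Aval_hasDeriv (g : ℝ → ℝ) (H : ℕ → ℕ) (θ : NNParams) (l h : ℕ) (x : ℕ → ℝ)
    (i0 : ℕ) (t : ℝ) :
    HasDerivAt (Aval g H θ l h x i0)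
      (∑ i ∈ Finset.range (H (l-1)), if i = i0 then layerOut g H θ x (l-1) i else 0) t := by
  apply HasDerivAt.add_const
  apply HasDerivAt.fun_sum
  intro i _
  by_cases hi : i = i0
  · subst hi
    simpa using (hasDerivAt_id t).mul_const (layerOut g H θ x (l-1) i)
  · simp only [if_neg hi]
    exact hasDerivAt_const t _

lemma Bval_hasDeriv (g : ℝ → ℝ) (H : ℕ → ℕ) (θ : NNParams) (l h : ℕ) (x : ℕ → ℝ) (t : ℝ) :
    HasDerivAt (Bval g H θ l h x) 1 t := by
  have := (hasDerivAt_id t).const_add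
    (∑ i ∈ Finset.range (H (l-1)), θ.w l h i * layerOut g H θ x (l-1) i)
  exact this

lemma Aval_base (g : ℝ → ℝ) (H : ℕ → ℕ) (θ : NNParams) (l h : ℕ) (x : ℕ → ℝ) (i0 : ℕ) :
    Aval g H θ l h x i0 (θ.w l h i0) = preact g H θ x l h := by
  unfold Aval preact
  congr 1
  apply Finset.sum_congr rfl
  intro i _
  by_cases hi : i = i0
  · subst hi; rw [if_pos rfl]
  · rw [if_neg hi]

lemma Bval_base (g : ℝ → ℝ) (H : ℕ → ℕ) (θ : NNParams) (l h : ℕ) (x : ℕ → ℝ) :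
    Bval g H θ l h x (θ.b l h) = preact g H θ x l h := rfl

section Gamma4

variable (g : ℝ → ℝ) (H : ℕ → ℕ) (θ : NNParams) (l h K : ℕ) (lam : ℕ → ℝ)

lemma hval_w (hl : 1 ≤ l) (hh : h < H l) (r0 i0 : ℕ) (hr0 : r0 = h ∨ H l ≤ r0)
    (t : ℝ) (x : ℕ → ℝ) :
    layerOut g (enlargeH H l K) (updW (gammaEmb H l K h lam θ) l r0 i0 t) x l r0
      = g (Aval g H θ l h x i0 t) := by
  set θ₁ : NNParams := updW (gammaEmb H l K h lam θ) l r0 i0 t with hθ₁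
  have hwlow : ∀ ℓ, 1 ≤ ℓ → ℓ < l → θ₁.w ℓ = θ.w ℓ := fun ℓ a b =>
    (updW_w_ne _ _ _ _ _ (by omega)).trans (gamma_w_ne H θ l h K lam (by omega) (by omega))
  have hblow : ∀ ℓ, 1 ≤ ℓ → ℓ < l → θ₁.b ℓ = θ.b ℓ := fun ℓ a b =>
    gamma_b_ne H θ l h K lam (by omega)
  have hgw : (gammaEmb H l K h lam θ).w l r0 = θ.w l h := by
    rcases hr0 with he | hge
    · rw [he]; exact gamma_w_row_lt H θ l h K lam hh
    · exact gamma_w_row_ge H θ l h K lam hge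
  have hgb : (gammaEmb H l K h lam θ).b l r0 = θ.b l h := by
    rcases hr0 with he | hge
    · rw [he]; exact gamma_b_row_lt H θ l h K lam hh
    · exact gamma_b_row_ge H θ l h K lam hge
  rw [enl_row_val g H θ l K x _ hl hwlow hblow r0,
    show θ₁.b l r0 = θ.b l h from hgb]
  unfold Aval
  congr 2
  apply Finset.sum_congr rfl
  intro i _
  congr 1
  rw [hθ₁, updW_w_at]
  by_cases hi : i = i0
  · rw [if_pos ⟨rfl, hi⟩, if_pos hi]
  · rw [if_neg (by tauto), if_neg hi, hgw]

lemma hval_b (hl : 1 ≤ l) (hh : h < H l) (r0 : ℕ) (hr0 : r0 = h ∨ H l ≤ r0)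
    (t : ℝ) (x : ℕ → ℝ) :
    layerOut g (enlargeH H l K) (updB (gammaEmb H l K h lam θ) l r0 t) x l r0
      = g (Bval g H θ l h x t) := by
  set θ₁ : NNParams := updB (gammaEmb H l K h lam θ) l r0 t with hθ₁
  have hwlow : ∀ ℓ, 1 ≤ ℓ → ℓ < l → θ₁.w ℓ = θ.w ℓ := fun ℓ a b =>
    gamma_w_ne H θ l h K lam (by omega) (by omega)
  have hblow : ∀ ℓ, 1 ≤ ℓ → ℓ < l → θ₁.b ℓ = θ.b ℓ := fun ℓ a b =>
    (updB_b_ne _ _ _ _ (by omega)).trans (gamma_b_ne H θ l h K lam (by omega))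
  have hgw : (gammaEmb H l K h lam θ).w l r0 = θ.w l h := by
    rcases hr0 with he | hge
    · rw [he]; exact gamma_w_row_lt H θ l h K lam hh
    · exact gamma_w_row_ge H θ l h K lam hge
  rw [enl_row_val g H θ l K x _ hl hwlow hblow r0,
    show θ₁.b l r0 = t from by rw [hθ₁, updB_b_at, if_pos rfl],
    show θ₁.w l r0 = θ.w l h from hgw]
  rfl

lemma BD_Remp_w (hl : 1 ≤ l) (hh : h < H l)
    (hlam : ∑ i ∈ Finset.range (K+1), lam i = 1)
    (L P : ℕ) {m : ℕ} (X Y : ℕ → ℕ → ℝ) (loss : (ℕ → ℝ) → (Fin m → ℝ) → ℝ)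
    (hlL : l + 1 ≤ L) (r0 i0 : ℕ) (μ : ℝ)
    (hr : (r0 = h ∧ μ = lam 0) ∨ ∃ k, k < K ∧ r0 = H l + k ∧ μ = lam (k+1)) (t : ℝ) :
    Remp g (enlargeH H l K) L P X Y loss (updW (gammaEmb H l K h lam θ) l r0 i0 t)
      = (1 / (P:ℝ)) * ∑ p ∈ Finset.range P, loss (Y p) (fun r =>
          preactC g H θ (X p) l h
            ((1 - μ) * layerOut g H θ (X p) l h + μ * g (Aval g H θ l h (X p) i0 t)) L r) := by
  have hr0 : r0 = h ∨ H l ≤ r0 := by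
    rcases hr with ⟨he, -⟩ | ⟨k, hk, he, -⟩
    · exact Or.inl he
    · exact Or.inr (by omega)
  unfold Remp
  congr 1
  apply Finset.sum_congr rfl
  intro p _
  congr 1
  funext r
  exact BD_preact g H θ l h K lam hl hh hlam (X p)
    (updW (gammaEmb H l K h lam θ) l r0 i0 t) r0 μ _ hr
    (fun ℓ hℓ => updW_w_ne _ _ _ _ _ (by omega))
    (fun ℓ hℓ => rfl)
    (fun r hr' => updW_w_row_ne _ _ _ _ _ hr')
    (fun r hr' => rfl)
    (hval_w g H θ l h K lam hl hh r0 i0 hr0 t (X p)) L hlL r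

lemma BD_Remp_b (hl : 1 ≤ l) (hh : h < H l)
    (hlam : ∑ i ∈ Finset.range (K+1), lam i = 1)
    (L P : ℕ) {m : ℕ} (X Y : ℕ → ℕ → ℝ) (loss : (ℕ → ℝ) → (Fin m → ℝ) → ℝ)
    (hlL : l + 1 ≤ L) (r0 : ℕ) (μ : ℝ)
    (hr : (r0 = h ∧ μ = lam 0) ∨ ∃ k, k < K ∧ r0 = H l + k ∧ μ = lam (k+1)) (t : ℝ) :
    Remp g (enlargeH H l K) L P X Y loss (updB (gammaEmb H l K h lam θ) l r0 t)
      = (1 / (P:ℝ)) * ∑ p ∈ Finset.range P, loss (Y p) (fun r =>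
          preactC g H θ (X p) l h
            ((1 - μ) * layerOut g H θ (X p) l h + μ * g (Bval g H θ l h (X p) t)) L r) := by
  have hr0 : r0 = h ∨ H l ≤ r0 := by
    rcases hr with ⟨he, -⟩ | ⟨k, hk, he, -⟩
    · exact Or.inl he
    · exact Or.inr (by omega)
  unfold Remp
  congr 1
  apply Finset.sum_congr rfl
  intro p _
  congr 1
  funext r
  exact BD_preact g H θ l h K lam hl hh hlam (X p)
    (updB (gammaEmb H l K h lam θ) l r0 t) r0 μ _ hr
    (fun ℓ hℓ => rfl)
    (fun ℓ hℓ => updB_b_ne _ _ _ _ (by omega))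
    (fun r hr' => rfl)
    (fun r hr' => updB_b_row_ne _ _ _ _ hr')
    (hval_b g H θ l h K lam hl hh r0 hr0 t (X p)) L hlL r

lemma orig_out_w (hl : 1 ≤ l) (x : ℕ → ℝ) (i0 : ℕ) (t : ℝ) (i : ℕ) :
    layerOut g H (updW θ l h i0 t) x l i
      = if i = h then g (Aval g H θ l h x i0 t) else layerOut g H θ x l i := by
  set θ₁ : NNParams := updW θ l h i0 t with hθ₁
  have hwlow : ∀ ℓ, 1 ≤ ℓ → ℓ < l → θ₁.w ℓ = θ.w ℓ := fun ℓ a b =>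
    updW_w_ne _ _ _ _ _ (by omega)
  have hblow : ∀ ℓ, 1 ≤ ℓ → ℓ < l → θ₁.b ℓ = θ.b ℓ := fun ℓ a b => rfl
  rw [orig_row_val g H θ l x θ₁ hl hwlow hblow i]
  by_cases hih : i = h
  · subst hih
    rw [if_pos rfl]
    show g _ = _
    unfold Aval
    congr 2
    · apply Finset.sum_congr rfl
      intro i' _
      congr 1
      rw [hθ₁, updW_w_at]
      by_cases hi' : i' = i0
      · rw [if_pos ⟨rfl, hi'⟩, if_pos hi']
      · rw [if_neg (by tauto), if_neg hi']
  · rw [if_neg hih,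
      show θ₁.w l i = θ.w l i from updW_w_row_ne _ _ _ _ _ hih,
      layerOut_eq_g_preact g H θ x hl]
    rfl

lemma orig_out_b (hl : 1 ≤ l) (x : ℕ → ℝ) (t : ℝ) (i : ℕ) :
    layerOut g H (updB θ l h t) x l i
      = if i = h then g (Bval g H θ l h x t) else layerOut g H θ x l i := by
  set θ₁ : NNParams := updB θ l h t with hθ₁
  have hwlow : ∀ ℓ, 1 ≤ ℓ → ℓ < l → θ₁.w ℓ = θ.w ℓ := fun ℓ a b => rfl
  have hblow : ∀ ℓ, 1 ≤ ℓ → ℓ < l → θ₁.b ℓ = θ.b ℓ := fun ℓ a b =>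
    updB_b_ne _ _ _ _ (by omega)
  rw [orig_row_val g H θ l x θ₁ hl hwlow hblow i]
  by_cases hih : i = h
  · subst hih
    rw [if_pos rfl, show θ₁.b l i = t from by rw [hθ₁, updB_b_at, if_pos rfl]]
    rfl
  · rw [if_neg hih,
      show θ₁.b l i = θ.b l i from updB_b_row_ne _ _ _ _ hih,
      layerOut_eq_g_preact g H θ x hl]
    rfl

lemma orig_preact_w (hl : 1 ≤ l) (x : ℕ → ℝ) (i0 : ℕ) (t : ℝ) :
    ∀ ℓ, l + 1 ≤ ℓ → ∀ j, preact g H (updW θ l h i0 t) x ℓ j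
      = preactC g H θ x l h (g (Aval g H θ l h x i0 t)) ℓ j := by
  apply preact_congr_C g x H _ H θ l h _ hl
  · intro ℓ hℓ; rfl
  · intro ℓ hℓ; exact updW_w_ne _ _ _ _ _ (by omega)
  · intro ℓ hℓ; rfl
  · intro j
    unfold preact preactC
    simp only [Nat.add_sub_cancel]
    rw [show (updW θ l h i0 t).w (l+1) = θ.w (l+1) from updW_w_ne _ _ _ _ _ (by omega)]
    congr 1
    apply Finset.sum_congr rfl
    intro i _
    rw [orig_out_w g H θ l h hl x i0 t i, layerOutC_at g H θ x l h _ i hl]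

lemma orig_preact_b (hl : 1 ≤ l) (x : ℕ → ℝ) (t : ℝ) :
    ∀ ℓ, l + 1 ≤ ℓ → ∀ j, preact g H (updB θ l h t) x ℓ j
      = preactC g H θ x l h (g (Bval g H θ l h x t)) ℓ j := by
  apply preact_congr_C g x H _ H θ l h _ hl
  · intro ℓ hℓ; rfl
  · intro ℓ hℓ; rfl
  · intro ℓ hℓ; exact updB_b_ne _ _ _ _ (by omega)
  · intro j
    unfold preact preactC
    simp only [Nat.add_sub_cancel]
    rw [show (updB θ l h t).b (l+1) j = θ.b (l+1) j from
      congrFun (updB_b_ne _ _ _ _ (by omega)) j]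
    congr 1
    apply Finset.sum_congr rfl
    intro i _
    rw [orig_out_b g H θ l h hl x t i, layerOutC_at g H θ x l h _ i hl]
    rfl

lemma orig_Remp_w (hl : 1 ≤ l)
    (L P : ℕ) {m : ℕ} (X Y : ℕ → ℕ → ℝ) (loss : (ℕ → ℝ) → (Fin m → ℝ) → ℝ)
    (hlL : l + 1 ≤ L) (i0 : ℕ) (t : ℝ) :
    Remp g H L P X Y loss (updW θ l h i0 t)
      = (1 / (P:ℝ)) * ∑ p ∈ Finset.range P, loss (Y p) (fun r =>
          preactC g H θ (X p) l h (g (Aval g H θ l h (X p) i0 t)) L r) := by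
  unfold Remp
  congr 1
  apply Finset.sum_congr rfl
  intro p _
  congr 1
  funext r
  exact orig_preact_w g H θ l h hl (X p) i0 t L hlL r

lemma orig_Remp_b (hl : 1 ≤ l)
    (L P : ℕ) {m : ℕ} (X Y : ℕ → ℕ → ℝ) (loss : (ℕ → ℝ) → (Fin m → ℝ) → ℝ)
    (hlL : l + 1 ≤ L) (t : ℝ) :
    Remp g H L P X Y loss (updB θ l h t)
      = (1 / (P:ℝ)) * ∑ p ∈ Finset.range P, loss (Y p) (fun r =>
          preactC g H θ (X p) l h (g (Bval g H θ l h (X p) t)) L r) := by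
  unfold Remp
  congr 1
  apply Finset.sum_congr rfl
  intro p _
  congr 1
  funext r
  exact orig_preact_b g H θ l h hl (X p) t L hlL r

lemma updW_gamma_comm (t : ℝ) (ℓ j i : ℕ)
    (hA : ℓ = l → j < H l ∧ j ≠ h) (hA2 : ℓ = l + 1 → i < H l ∧ i ≠ h) :
    updW (gammaEmb H l K h lam θ) ℓ j i t = gammaEmb H l K h lam (updW θ ℓ j i t) := by
  apply NNParams.ext2
  · intro ℓ' j' i'
    simp only [updW, gammaEmb]
    split_ifs <;> first | rfl | (exfalso; omega)
  · intro ℓ' j'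
    rfl

lemma updB_gamma_comm (t : ℝ) (ℓ j : ℕ)
    (hA : ℓ = l → j < H l ∧ j ≠ h) :
    updB (gammaEmb H l K h lam θ) ℓ j t = gammaEmb H l K h lam (updB θ ℓ j t) := by
  apply NNParams.ext2
  · intro ℓ' j' i'
    rfl
  · intro ℓ' j'
    simp only [updB, gammaEmb]
    split_ifs <;> first | rfl | (exfalso; omega)

lemma gamma_w_point (ℓ j i : ℕ) (hA : ℓ = l → j < H l) (hA2 : ℓ = l + 1 → i < H l ∧ i ≠ h) :
    (gammaEmb H l K h lam θ).w ℓ j i = θ.w ℓ j i := by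
  simp only [gammaEmb]
  split_ifs <;> first | rfl | (exfalso; omega)

lemma gamma_b_point (ℓ j : ℕ) (hA : ℓ = l → j < H l) :
    (gammaEmb H l K h lam θ).b ℓ j = θ.b ℓ j := by
  simp only [gammaEmb]
  split_ifs <;> first | rfl | (exfalso; omega)

end Gamma4


section Gamma5

variable (g : ℝ → ℝ) (H : ℕ → ℕ) (θ : NNParams) (l h K : ℕ) (lam : ℕ → ℝ)

lemma crit_BD_w (hg : Differentiable ℝ g)
    (L P : ℕ) {m : ℕ} (X Y : ℕ → ℕ → ℝ) (loss : (ℕ → ℝ) → (Fin m → ℝ) → ℝ)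
    (hloss : ∀ y, Differentiable ℝ (fun z : EuclideanSpace ℝ (Fin m) => loss y z))
    (hl : 1 ≤ l) (hh : h < H l) (hlL : l + 1 ≤ L)
    (hlam : ∑ i ∈ Finset.range (K+1), lam i = 1)
    (r0 i0 : ℕ) (μ : ℝ)
    (hr : (r0 = h ∧ μ = lam 0) ∨ ∃ k, k < K ∧ r0 = H l + k ∧ μ = lam (k+1))
    (hcrit : deriv (fun t => Remp g H L P X Y loss (updW θ l h i0 t)) (θ.w l h i0) = 0) :
    deriv (fun t => Remp g (enlargeH H l K) L P X Y loss
        (updW (gammaEmb H l K h lam θ) l r0 i0 t))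
      ((gammaEmb H l K h lam θ).w l r0 i0) = 0 := by
  have hr0 : r0 = h ∨ H l ≤ r0 := by
    rcases hr with ⟨he, -⟩ | ⟨k, hk, he, -⟩
    · exact Or.inl he
    · exact Or.inr (by omega)
  have hpt : (gammaEmb H l K h lam θ).w l r0 i0 = θ.w l h i0 := by
    rcases hr0 with he | hge
    · rw [he]; exact congrFun (gamma_w_row_lt H θ l h K lam hh) i0
    · exact congrFun (gamma_w_row_ge H θ l h K lam hge) i0
  rw [hpt,
    show (fun t => Remp g (enlargeH H l K) L P X Y loss
        (updW (gammaEmb H l K h lam θ) l r0 i0 t))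
      = fun t => (1 / (P:ℝ)) * ∑ p ∈ Finset.range P, loss (Y p) (fun r =>
          preactC g H θ (X p) l h
            ((1 - μ) * layerOut g H θ (X p) l h + μ * g (Aval g H θ l h (X p) i0 t)) L r)
      from funext fun t => BD_Remp_w g H θ l h K lam hl hh hlam L P X Y loss hlL r0 i0 μ hr t]
  have h0 : deriv (fun t => (1 / (P:ℝ)) * ∑ p ∈ Finset.range P, loss (Y p) (fun r =>
      preactC g H θ (X p) l h (g (Aval g H θ l h (X p) i0 t)) L r)) (θ.w l h i0) = 0 := by
    rw [← show (fun t => Remp g H L P X Y loss (updW θ l h i0 t))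
        = fun t => (1 / (P:ℝ)) * ∑ p ∈ Finset.range P, loss (Y p) (fun r =>
            preactC g H θ (X p) l h (g (Aval g H θ l h (X p) i0 t)) L r)
        from funext fun t => orig_Remp_w g H θ l h hl L P X Y loss hlL i0 t]
    exact hcrit
  exact key_deriv g hg P
    (fun p c => loss (Y p) (fun r => preactC g H θ (X p) l h c L r))
    (fun p => loss_comp_diff (loss (Y p)) (hloss (Y p)) _
      (fun r => preactC_diff g hg H θ (X p) l h L r))
    (fun p => Aval g H θ l h (X p) i0)
    (fun p => ∑ i ∈ Finset.range (H (l-1)), if i = i0 then layerOut g H θ (X p) (l-1) i else 0)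
    (fun p t => Aval_hasDeriv g H θ l h (X p) i0 t)
    (θ.w l h i0)
    (fun p => layerOut g H θ (X p) l h)
    (fun p => by
      show g (Aval g H θ l h (X p) i0 (θ.w l h i0)) = layerOut g H θ (X p) l h
      rw [Aval_base]; exact (layerOut_eq_g_preact g H θ (X p) hl).symm)
    μ h0

lemma crit_BD_b (hg : Differentiable ℝ g)
    (L P : ℕ) {m : ℕ} (X Y : ℕ → ℕ → ℝ) (loss : (ℕ → ℝ) → (Fin m → ℝ) → ℝ)
    (hloss : ∀ y, Differentiable ℝ (fun z : EuclideanSpace ℝ (Fin m) => loss y z))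
    (hl : 1 ≤ l) (hh : h < H l) (hlL : l + 1 ≤ L)
    (hlam : ∑ i ∈ Finset.range (K+1), lam i = 1)
    (r0 : ℕ) (μ : ℝ)
    (hr : (r0 = h ∧ μ = lam 0) ∨ ∃ k, k < K ∧ r0 = H l + k ∧ μ = lam (k+1))
    (hcrit : deriv (fun t => Remp g H L P X Y loss (updB θ l h t)) (θ.b l h) = 0) :
    deriv (fun t => Remp g (enlargeH H l K) L P X Y loss
        (updB (gammaEmb H l K h lam θ) l r0 t))
      ((gammaEmb H l K h lam θ).b l r0) = 0 := by
  have hr0 : r0 = h ∨ H l ≤ r0 := by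
    rcases hr with ⟨he, -⟩ | ⟨k, hk, he, -⟩
    · exact Or.inl he
    · exact Or.inr (by omega)
  have hpt : (gammaEmb H l K h lam θ).b l r0 = θ.b l h := by
    rcases hr0 with he | hge
    · rw [he]; exact gamma_b_row_lt H θ l h K lam hh
    · exact gamma_b_row_ge H θ l h K lam hge
  rw [hpt,
    show (fun t => Remp g (enlargeH H l K) L P X Y loss
        (updB (gammaEmb H l K h lam θ) l r0 t))
      = fun t => (1 / (P:ℝ)) * ∑ p ∈ Finset.range P, loss (Y p) (fun r =>
          preactC g H θ (X p) l h
            ((1 - μ) * layerOut g H θ (X p) l h + μ * g (Bval g H θ l h (X p) t)) L r)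
      from funext fun t => BD_Remp_b g H θ l h K lam hl hh hlam L P X Y loss hlL r0 μ hr t]
  have h0 : deriv (fun t => (1 / (P:ℝ)) * ∑ p ∈ Finset.range P, loss (Y p) (fun r =>
      preactC g H θ (X p) l h (g (Bval g H θ l h (X p) t)) L r)) (θ.b l h) = 0 := by
    rw [← show (fun t => Remp g H L P X Y loss (updB θ l h t))
        = fun t => (1 / (P:ℝ)) * ∑ p ∈ Finset.range P, loss (Y p) (fun r =>
            preactC g H θ (X p) l h (g (Bval g H θ l h (X p) t)) L r)
        from funext fun t => orig_Remp_b g H θ l h hl L P X Y loss hlL t]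
    exact hcrit
  exact key_deriv g hg P
    (fun p c => loss (Y p) (fun r => preactC g H θ (X p) l h c L r))
    (fun p => loss_comp_diff (loss (Y p)) (hloss (Y p)) _
      (fun r => preactC_diff g hg H θ (X p) l h L r))
    (fun p => Bval g H θ l h (X p))
    (fun p => 1)
    (fun p t => Bval_hasDeriv g H θ l h (X p) t)
    (θ.b l h)
    (fun p => layerOut g H θ (X p) l h)
    (fun p => by
      show g (Bval g H θ l h (X p) (θ.b l h)) = layerOut g H θ (X p) l h
      rw [Bval_base]; exact (layerOut_eq_g_preact g H θ (X p) hl).symm)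
    μ h0

lemma crit_C_w
    (L P : ℕ) {m : ℕ} (X Y : ℕ → ℕ → ℝ) (loss : (ℕ → ℝ) → (Fin m → ℝ) → ℝ)
    (hl : 1 ≤ l) (hh : h < H l) (hlL : l + 1 ≤ L)
    (hlam : ∑ i ∈ Finset.range (K+1), lam i = 1)
    (j0 i0 : ℕ) (μ : ℝ)
    (hr : (i0 = h ∧ μ = lam 0) ∨ ∃ k, k < K ∧ i0 = H l + k ∧ μ = lam (k+1))
    (hcrit : deriv (fun t => Remp g H L P X Y loss (updW θ (l+1) j0 h t))
      (θ.w (l+1) j0 h) = 0) :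
    deriv (fun t => Remp g (enlargeH H l K) L P X Y loss
        (updW (gammaEmb H l K h lam θ) (l+1) j0 i0 t))
      ((gammaEmb H l K h lam θ).w (l+1) j0 i0) = 0 := by
  have hpt : (gammaEmb H l K h lam θ).w (l+1) j0 i0 = μ * θ.w (l+1) j0 h := by
    rcases hr with ⟨he, hμ⟩ | ⟨k, hk, he, hμ⟩
    · rw [he, hμ]; exact gamma_w_out_h H θ l h K lam
    · rw [he, hμ]; exact gamma_w_out_new H θ l h K lam hh
  rw [hpt,
    show (fun t => Remp g (enlargeH H l K) L P X Y loss
        (updW (gammaEmb H l K h lam θ) (l+1) j0 i0 t))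
      = fun t => Remp g H L P X Y loss
          (updW θ (l+1) j0 h (t + (1 - μ) * θ.w (l+1) j0 h))
      from funext fun t => C_Remp_eq g H θ l h K lam hl hh hlam L P X Y loss hlL j0 i0 μ hr t]
  have key := deriv_comp_add_const
    (fun s => Remp g H L P X Y loss (updW θ (l+1) j0 h s))
    ((1 - μ) * θ.w (l+1) j0 h) (μ * θ.w (l+1) j0 h)
  rw [show μ * θ.w (l+1) j0 h + (1 - μ) * θ.w (l+1) j0 h = θ.w (l+1) j0 h from by ring]
    at key
  exact key.trans hcrit

lemma crit_A_w
    (L P : ℕ) {m : ℕ} (X Y : ℕ → ℕ → ℝ) (loss : (ℕ → ℝ) → (Fin m → ℝ) → ℝ)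
    (hl : 1 ≤ l) (hh : h < H l) (hlL : l + 1 ≤ L)
    (hlam : ∑ i ∈ Finset.range (K+1), lam i = 1)
    (ℓ j i : ℕ)
    (hA : ℓ = l → j < H l ∧ j ≠ h) (hA2 : ℓ = l + 1 → i < H l ∧ i ≠ h)
    (hcrit : deriv (fun t => Remp g H L P X Y loss (updW θ ℓ j i t)) (θ.w ℓ j i) = 0) :
    deriv (fun t => Remp g (enlargeH H l K) L P X Y loss
        (updW (gammaEmb H l K h lam θ) ℓ j i t))
      ((gammaEmb H l K h lam θ).w ℓ j i) = 0 := by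
  have hpt : (gammaEmb H l K h lam θ).w ℓ j i = θ.w ℓ j i :=
    gamma_w_point H θ l h K lam ℓ j i (fun hc => (hA hc).1) hA2
  rw [hpt,
    show (fun t => Remp g (enlargeH H l K) L P X Y loss
        (updW (gammaEmb H l K h lam θ) ℓ j i t))
      = fun t => Remp g H L P X Y loss (updW θ ℓ j i t)
      from funext fun t => by
        rw [updW_gamma_comm H θ l h K lam t ℓ j i hA hA2]
        exact gamma_Remp_eq g H l h K lam hl hh hlam L P X Y loss hlL (updW θ ℓ j i t)]
  exact hcrit

lemma crit_A_b
    (L P : ℕ) {m : ℕ} (X Y : ℕ → ℕ → ℝ) (loss : (ℕ → ℝ) → (Fin m → ℝ) → ℝ)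
    (hl : 1 ≤ l) (hh : h < H l) (hlL : l + 1 ≤ L)
    (hlam : ∑ i ∈ Finset.range (K+1), lam i = 1)
    (ℓ j : ℕ)
    (hA : ℓ = l → j < H l ∧ j ≠ h)
    (hcrit : deriv (fun t => Remp g H L P X Y loss (updB θ ℓ j t)) (θ.b ℓ j) = 0) :
    deriv (fun t => Remp g (enlargeH H l K) L P X Y loss
        (updB (gammaEmb H l K h lam θ) ℓ j t))
      ((gammaEmb H l K h lam θ).b ℓ j) = 0 := by
  have hpt : (gammaEmb H l K h lam θ).b ℓ j = θ.b ℓ j :=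
    gamma_b_point H θ l h K lam ℓ j (fun hc => (hA hc).1)
  rw [hpt,
    show (fun t => Remp g (enlargeH H l K) L P X Y loss
        (updB (gammaEmb H l K h lam θ) ℓ j t))
      = fun t => Remp g H L P X Y loss (updB θ ℓ j t)
      from funext fun t => by
        rw [updB_gamma_comm H θ l h K lam t ℓ j hA]
        exact gamma_Remp_eq g H l h K lam hl hh hlam L P X Y loss hlL (updB θ ℓ j t)]
  exact hcrit

end Gamma5


/-- If `g` and the loss (in its second argument) are differentiable and
`θ` is a stationary point of the empirical risk of the original network, then for every
unit `h < H l` and coefficients `λ_0, …, λ_K` summing to one, the point `θ̂ = γ_λ(θ)` is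
a stationary point of the empirical risk of the enlarged network. -/
theorem gammaEmb_is_critical
    (g : ℝ → ℝ) (H : ℕ → ℕ) (L P : ℕ) (X Y : ℕ → ℕ → ℝ)
    (loss : (ℕ → ℝ) → (Fin (H L) → ℝ) → ℝ)
    (hg : Differentiable ℝ g)
    (hloss : ∀ y : ℕ → ℝ,
      Differentiable ℝ (fun z : EuclideanSpace ℝ (Fin (H L)) => loss y z))
    (l : ℕ) (hl1 : 1 ≤ l) (hlL : l + 1 ≤ L) (K : ℕ)
    (h : ℕ) (hh : h < H l) (lam : ℕ → ℝ)
    (hlam : ∑ i ∈ Finset.range (K + 1), lam i = 1)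
    (θ : NNParams) (hθ : IsCritical g H L P X Y loss θ)
    (θhat : NNParams) (hemb : θhat = gammaEmb H l K h lam θ) :
    IsCritical g (enlargeH H l K) L P X Y loss θhat := by
  subst hemb
  have hcw := hθ.1
  have hcb := hθ.2
  constructor
  · intro ℓ j i h1 hL hj hi
    by_cases hel : ℓ = l
    · subst hel
      have hiH : i < H (ℓ - 1) := by rwa [enlargeH_ne H ℓ K (by omega)] at hi
      have hjHK : j < H ℓ + K := by
        rw [show enlargeH H ℓ K ℓ = H ℓ + K from by simp [enlargeH]] at hj
        exact hj
      rcases Nat.lt_or_ge j (H ℓ) with hjlt | hjge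
      · by_cases hjh : j = h
        · exact crit_BD_w g H θ ℓ h K lam hg L P X Y loss hloss hl1 hh hlL hlam j i (lam 0)
            (Or.inl ⟨hjh, rfl⟩) (hcw ℓ h i hl1 (by omega) hh hiH)
        · exact crit_A_w g H θ ℓ h K lam L P X Y loss hl1 hh hlL hlam ℓ j i
            (fun _ => ⟨hjlt, hjh⟩) (fun hc => absurd hc (by omega))
            (hcw ℓ j i hl1 (by omega) hjlt hiH)
      · exact crit_BD_w g H θ ℓ h K lam hg L P X Y loss hloss hl1 hh hlL hlam j i
          (lam (j - H ℓ + 1)) (Or.inr ⟨j - H ℓ, by omega, by omega, rfl⟩)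
          (hcw ℓ h i hl1 (by omega) hh hiH)
    · by_cases hel1 : ℓ = l + 1
      · subst hel1
        have hjH : j < H (l + 1) := by rwa [enlargeH_ne H l K (by omega)] at hj
        have hiHK : i < H l + K := by
          have he : enlargeH H l K ((l + 1) - 1) = H l + K := by simp [enlargeH]
          rwa [he] at hi
        by_cases hih : i = h
        · exact crit_C_w g H θ l h K lam L P X Y loss hl1 hh hlL hlam j i (lam 0)
            (Or.inl ⟨hih, rfl⟩) (hcw (l+1) j h (by omega) hlL hjH hh)
        · rcases Nat.lt_or_ge i (H l) with hilt | hige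
          · exact crit_A_w g H θ l h K lam L P X Y loss hl1 hh hlL hlam (l+1) j i
              (fun hc => absurd hc (by omega)) (fun _ => ⟨hilt, hih⟩)
              (hcw (l+1) j i (by omega) hlL hjH hilt)
          · exact crit_C_w g H θ l h K lam L P X Y loss hl1 hh hlL hlam j i
              (lam (i - H l + 1)) (Or.inr ⟨i - H l, by omega, by omega, rfl⟩)
              (hcw (l+1) j h (by omega) hlL hjH hh)
      · have hjH : j < H ℓ := by rwa [enlargeH_ne H l K hel] at hj
        have hiH : i < H (ℓ - 1) := by rwa [enlargeH_ne H l K (by omega)] at hi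
        exact crit_A_w g H θ l h K lam L P X Y loss hl1 hh hlL hlam ℓ j i
          (fun hc => absurd hc hel) (fun hc => absurd hc hel1) (hcw ℓ j i h1 hL hjH hiH)
  · intro ℓ j h1 hL hj
    by_cases hel : ℓ = l
    · subst hel
      have hjHK : j < H ℓ + K := by
        rw [show enlargeH H ℓ K ℓ = H ℓ + K from by simp [enlargeH]] at hj
        exact hj
      rcases Nat.lt_or_ge j (H ℓ) with hjlt | hjge
      · by_cases hjh : j = h
        · exact crit_BD_b g H θ ℓ h K lam hg L P X Y loss hloss hl1 hh hlL hlam j (lam 0)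
            (Or.inl ⟨hjh, rfl⟩) (hcb ℓ h hl1 (by omega) hh)
        · exact crit_A_b g H θ ℓ h K lam L P X Y loss hl1 hh hlL hlam ℓ j
            (fun _ => ⟨hjlt, hjh⟩) (hcb ℓ j hl1 (by omega) hjlt)
      · exact crit_BD_b g H θ ℓ h K lam hg L P X Y loss hloss hl1 hh hlL hlam j
          (lam (j - H ℓ + 1)) (Or.inr ⟨j - H ℓ, by omega, by omega, rfl⟩)
          (hcb ℓ h hl1 (by omega) hh)
    · have hjH : j < H ℓ := by rwa [enlargeH_ne H l K hel] at hj
      exact crit_A_b g H θ l h K lam L P X Y loss hl1 hh hlL hlam ℓ j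
        (fun hc => absurd hc hel) (hcb ℓ j h1 hL hjH)
end
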